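/- arXiv:1409.7899 — 8 statements merged into one kernel-verified Lean document; each statement's English description precedes it below -/
import Mathlib

section
/- Let L ⊆ V ⊕ V* be a maximal isotropic subspace and W ⊆ V a subspace with annihilator W⁰ ⊆ V*. If (W ⊕ W⁰) ∩ L = {0}, then the subspace H := {X ∈ V : ∃ α ∈ W⁰, (X,α) ∈ L} is a complement of W in V, i.e. V = H ⊕ W. -/
open Module

noncomputable def pairPlus {V : Type*} [AddCommGroup V] [Module ℝ V]
    (p q : V × Module.Dual ℝ V) : ℝ :=
  (1 / 2) * (p.2 q.1 + q.2 p.1)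

def IsIsotropicP {V : Type*} [AddCommGroup V] [Module ℝ V]
    (L : Submodule ℝ (V × Module.Dual ℝ V)) : Prop :=
  ∀ p ∈ L, ∀ q ∈ L, pairPlus p q = 0

def IsMaxIsotropicP {V : Type*} [AddCommGroup V] [Module ℝ V]
    (L : Submodule ℝ (V × Module.Dual ℝ V)) : Prop :=
  IsIsotropicP L ∧ ∀ L' : Submodule ℝ (V × Module.Dual ℝ V),
    IsIsotropicP L' → L ≤ L' → L = L'

/-- The horizontal space `H = {X ∈ V : ∃ α ∈ W⁰, (X,α) ∈ L}` associated with a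
subspace `L ⊆ V ⊕ V*` and a subspace `W ⊆ V`. -/
def horizSub {V : Type*} [AddCommGroup V] [Module ℝ V]
    (L : Submodule ℝ (V × Module.Dual ℝ V)) (W : Submodule ℝ V) :
    Submodule ℝ V where
  carrier := {X | ∃ α ∈ W.dualAnnihilator, (X, α) ∈ L}
  add_mem' := by
    rintro a b ⟨α, hα, hαL⟩ ⟨β, hβ, hβL⟩
    exact ⟨α + β, Submodule.add_mem _ hα hβ, L.add_mem hαL hβL⟩
  zero_mem' := ⟨0, Submodule.zero_mem _, L.zero_mem⟩
  smul_mem' := by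
    rintro c a ⟨α, hα, hαL⟩
    exact ⟨c • α, Submodule.smul_mem _ _ hα, L.smul_mem c hαL⟩

/-!
If `L` is maximal isotropic, then `L + 0 ⊕ (pr_V L)⁰` is still isotropic, so it equals `L`; with
isotropy this gives `L ∩ V* = (pr_V L)⁰`, hence `dim L = dim pr_V L + dim (pr_V L)⁰ = dim V`.
The hypothesis `(W ⊕ W⁰) ∩ L = 0` gives `H ∩ W = 0`, and makes `pr_V` injective on
`L ∩ (V ⊕ W⁰)`, whose image is `H`. Counting dimensions in `V ⊕ V*`,
`dim H ≥ dim L + dim (V ⊕ W⁰) - 2 dim V = dim W⁰ = dim V - dim W`.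
-/

open LinearMap (fst inr)

section ProdFinrank

variable {K M N : Type*} [DivisionRing K] [AddCommGroup M] [Module K M] [AddCommGroup N]
  [Module K N] [FiniteDimensional K M] [FiniteDimensional K N]

theorem Submodule.finrank_map_fst_add_finrank_comap_inr (L : Submodule K (M × N)) :
    finrank K (L.map (LinearMap.fst K M N)) + finrank K (L.comap (LinearMap.inr K M N)) =
      finrank K L := by
  set f := (LinearMap.fst K M N).domRestrict L
  set g := (LinearMap.inr K M N).restrict (p := L.comap (LinearMap.inr K M N)) (q := L)
    fun _ hx => hx
  have hg : Function.Injective g := fun x y h => by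
    ext
    exact congrArg (fun z : L => (z : M × N).2) h
  have hrange : LinearMap.range g = LinearMap.ker f := by
    ext ⟨⟨a, b⟩, h⟩
    constructor
    · rintro ⟨x, hx⟩
      exact congrArg (fun z : L => (z : M × N).1) hx.symm
    · intro (ha : a = 0)
      subst ha
      exact ⟨⟨b, h⟩, rfl⟩
  rw [← LinearMap.finrank_range_add_finrank_ker f, LinearMap.range_domRestrict, ← hrange,
    LinearMap.finrank_range_of_inj hg]

theorem Submodule.finrank_prod (p : Submodule K M) (q : Submodule K N) :
    finrank K (p.prod q) = finrank K p + finrank K q := by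
  rw [← (p.prod q).finrank_map_fst_add_finrank_comap_inr, Submodule.prod_map_fst,
    Submodule.prod_comap_inr]

end ProdFinrank

section Isotropic

variable {V : Type*} [AddCommGroup V] [Module ℝ V] {L : Submodule ℝ (V × Dual ℝ V)}

theorem IsIsotropicP.comap_inr_le_dualAnnihilator (hL : IsIsotropicP L) :
    L.comap (inr ℝ V (Dual ℝ V)) ≤ (L.map (fst ℝ V (Dual ℝ V))).dualAnnihilator := by
  intro β hβ
  rw [Submodule.mem_dualAnnihilator]
  rintro _ ⟨⟨X, α⟩, hXα, rfl⟩
  simpa [pairPlus] using hL _ hβ _ hXα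

theorem IsIsotropicP.sup_prod_dualAnnihilator (hL : IsIsotropicP L) :
    IsIsotropicP
      (L ⊔ (⊥ : Submodule ℝ V).prod (L.map (fst ℝ V (Dual ℝ V))).dualAnnihilator) := by
  rintro _ hp _ hq
  obtain ⟨l, hl, ⟨_, β⟩, ⟨rfl : _ = (0 : V), hβ⟩, rfl⟩ := Submodule.mem_sup.1 hp
  obtain ⟨l', hl', ⟨_, β'⟩, ⟨rfl : _ = (0 : V), hβ'⟩, rfl⟩ := Submodule.mem_sup.1 hq
  have hβl' : β l'.1 = 0 :=
    (Submodule.mem_dualAnnihilator _).1 hβ _ (Submodule.mem_map_of_mem hl')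
  have hβ'l : β' l.1 = 0 :=
    (Submodule.mem_dualAnnihilator _).1 hβ' _ (Submodule.mem_map_of_mem hl)
  have hll' := hL l hl l' hl'
  simp only [pairPlus, Prod.fst_add, Prod.snd_add, add_zero, LinearMap.add_apply] at hll' ⊢
  linarith

theorem IsMaxIsotropicP.comap_inr_eq_dualAnnihilator (hL : IsMaxIsotropicP L) :
    L.comap (inr ℝ V (Dual ℝ V)) = (L.map (fst ℝ V (Dual ℝ V))).dualAnnihilator := by
  refine le_antisymm hL.1.comap_inr_le_dualAnnihilator fun β hβ => ?_
  rw [hL.2 _ hL.1.sup_prod_dualAnnihilator le_sup_left]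
  exact Submodule.mem_sup_right ⟨Submodule.zero_mem _, hβ⟩

theorem IsMaxIsotropicP.finrank_eq [FiniteDimensional ℝ V] (hL : IsMaxIsotropicP L) :
    finrank ℝ L = finrank ℝ V := by
  rw [← L.finrank_map_fst_add_finrank_comap_inr, hL.comap_inr_eq_dualAnnihilator,
    Subspace.finrank_add_finrank_dualAnnihilator_eq]

end Isotropic

section Horizontal

variable {V : Type*} [AddCommGroup V] [Module ℝ V] {L : Submodule ℝ (V × Dual ℝ V)}
  {W : Submodule ℝ V}

variable (L W) in
theorem horizSub_eq_map :
    horizSub L W =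
      (L ⊓ (⊤ : Submodule ℝ V).prod W.dualAnnihilator).map (fst ℝ V (Dual ℝ V)) := by
  ext X
  constructor
  · rintro ⟨α, hα, hXα⟩
    exact ⟨(X, α), ⟨hXα, trivial, hα⟩, rfl⟩
  · rintro ⟨⟨_, α⟩, ⟨hXα, -, hα⟩, rfl⟩
    exact ⟨α, hα, hXα⟩

theorem disjoint_horizSub (hnd : Disjoint (W.prod W.dualAnnihilator) L) :
    Disjoint (horizSub L W) W := by
  rw [Submodule.disjoint_def]
  rintro X ⟨α, hα, hXα⟩ hX
  exact congrArg Prod.fst (Submodule.disjoint_def.1 hnd (X, α) ⟨hX, hα⟩ hXα)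

theorem finrank_dualAnnihilator_le_finrank_horizSub [FiniteDimensional ℝ V]
    (hL : IsMaxIsotropicP L) (hnd : Disjoint (W.prod W.dualAnnihilator) L) :
    finrank ℝ W.dualAnnihilator ≤ finrank ℝ (horizSub L W) := by
  set T := (⊤ : Submodule ℝ V).prod W.dualAnnihilator
  have hker : (L ⊓ T).comap (inr ℝ V (Dual ℝ V)) = ⊥ := by
    refine (Submodule.eq_bot_iff _).2 fun β ⟨hβL, _, hβ⟩ => ?_
    exact congrArg Prod.snd (Submodule.disjoint_def.1 hnd (0, β) ⟨W.zero_mem, hβ⟩ hβL)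
  have hH : finrank ℝ (horizSub L W) = finrank ℝ ↥(L ⊓ T) := by
    rw [horizSub_eq_map, ← (L ⊓ T).finrank_map_fst_add_finrank_comap_inr, hker, finrank_bot,
      add_zero]
  have hT : finrank ℝ T = finrank ℝ V + finrank ℝ W.dualAnnihilator := by
    rw [Submodule.finrank_prod, finrank_top]
  have hsup : finrank ℝ ↥(L ⊔ T) ≤ finrank ℝ V + finrank ℝ V := by
    simpa only [Module.finrank_prod, Subspace.dual_finrank_eq] using (L ⊔ T).finrank_le
  have hinf := Submodule.finrank_sup_add_finrank_inf_eq L T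
  rw [hL.finrank_eq] at hinf
  omega

end Horizontal

/-- If `L ⊆ V ⊕ V*` is maximal isotropic and `(W ⊕ W⁰) ∩ L = 0`, then
`H = {X : ∃ α ∈ W⁰, (X,α) ∈ L}` is a complement of `W` in `V`. -/
theorem horizSub_isCompl
    {V : Type*} [AddCommGroup V] [Module ℝ V] [FiniteDimensional ℝ V]
    (L : Submodule ℝ (V × Module.Dual ℝ V)) (W : Submodule ℝ V)
    (hL : IsMaxIsotropicP L)
    (hnd : W.prod W.dualAnnihilator ⊓ L = ⊥) :
    IsCompl (horizSub L W) W := by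
  have hdisj : Disjoint (W.prod W.dualAnnihilator) L := disjoint_iff.2 hnd
  refine (Submodule.isCompl_iff_disjoint _ _ ?_).2 (disjoint_horizSub hdisj)
  have hW := Subspace.finrank_add_finrank_dualAnnihilator_eq W
  have hH := finrank_dualAnnihilator_le_finrank_horizSub hL hdisj
  omega
end

section
/- Let L ⊆ V ⊕ V* be maximal isotropic and W ⊆ V a subspace with (W ⊕ W⁰) ∩ L = {0}, and set H := {X ∈ V : ∃ α ∈ W⁰, (X,α) ∈ L}. Then for every X ∈ H there exists a unique α ∈ W⁰ with (X,α) ∈ L, and the assignment ω_H(X₁,X₂) := α₁(X₂) (where (X_i, α_i) ∈ L, α_i ∈ W⁰) defines a skew-symmetric bilinear form on H; in particular α₁(X₂) = −α₂(X₁). -/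
open Module

/-- If `L` is maximal isotropic with `(W ⊕ W⁰) ∩ L = 0` and
`H = {X : ∃ α ∈ W⁰, (X,α) ∈ L}`, then every `X ∈ H` admits a unique
`α ∈ W⁰` with `(X,α) ∈ L`, one has `α₁(X₂) = −α₂(X₁)` for such pairs, and
`ω_H(X₁,X₂) := α₁(X₂)` defines a skew-symmetric bilinear form on `H`. -/
theorem horizontal_form_wellDefined_skew
    {V : Type*} [AddCommGroup V] [Module ℝ V] [FiniteDimensional ℝ V]
    (L : Submodule ℝ (V × Module.Dual ℝ V)) (W : Submodule ℝ V)
    (hL : IsMaxIsotropicP L)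
    (hnd : W.prod W.dualAnnihilator ⊓ L = ⊥) :
    (∀ X ∈ horizSub L W,
      ∃! α : Module.Dual ℝ V, α ∈ W.dualAnnihilator ∧ (X, α) ∈ L) ∧
    (∀ (X₁ X₂ : V) (α₁ α₂ : Module.Dual ℝ V),
      α₁ ∈ W.dualAnnihilator → α₂ ∈ W.dualAnnihilator →
      (X₁, α₁) ∈ L → (X₂, α₂) ∈ L → α₁ X₂ = -(α₂ X₁)) ∧
    (∃ ω : horizSub L W →ₗ[ℝ] horizSub L W →ₗ[ℝ] ℝ,
      (∀ (x₁ x₂ : horizSub L W) (α₁ : Module.Dual ℝ V),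
        α₁ ∈ W.dualAnnihilator → ((x₁ : V), α₁) ∈ L → ω x₁ x₂ = α₁ (x₂ : V)) ∧
      (∀ x₁ x₂ : horizSub L W, ω x₁ x₂ = -ω x₂ x₁)) := by

  have key : ∀ (X : V) (α β : Module.Dual ℝ V),
      α ∈ W.dualAnnihilator → (X, α) ∈ L →
      β ∈ W.dualAnnihilator → (X, β) ∈ L → β = α := by
    intro X α β hα hαL hβ hβL
    have hmem : ((0 : V), β - α) ∈ W.prod W.dualAnnihilator ⊓ L := by
      refine ⟨⟨W.zero_mem, Submodule.sub_mem _ hβ hα⟩, ?_⟩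
      simpa using L.sub_mem hβL hαL
    rw [hnd, Submodule.mem_bot] at hmem
    have : β - α = 0 := congrArg Prod.snd hmem
    exact sub_eq_zero.mp this
  have skew : ∀ (X₁ X₂ : V) (α₁ α₂ : Module.Dual ℝ V),
      α₁ ∈ W.dualAnnihilator → α₂ ∈ W.dualAnnihilator →
      (X₁, α₁) ∈ L → (X₂, α₂) ∈ L → α₁ X₂ = -(α₂ X₁) := by
    intro X₁ X₂ α₁ α₂ _ _ h1 h2
    have := hL.1 _ h1 _ h2
    simp only [pairPlus] at this
    linarith
  have uniq : ∀ X ∈ horizSub L W,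
      ∃! α : Module.Dual ℝ V, α ∈ W.dualAnnihilator ∧ (X, α) ∈ L := by
    rintro X ⟨α, hα, hαL⟩
    exact ⟨α, ⟨hα, hαL⟩, fun β ⟨hβ, hβL⟩ => key X α β hα hαL hβ hβL⟩
  refine ⟨uniq, skew, ?_⟩
  choose A hA1 hA2 using fun x : horizSub L W =>
    (x.2 : ∃ α ∈ W.dualAnnihilator, ((x : V), α) ∈ L)
  have hAeq : ∀ (x : horizSub L W) (β : Module.Dual ℝ V),
      β ∈ W.dualAnnihilator → ((x : V), β) ∈ L → β = A x := by
    intro x β hβ hβL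
    exact key _ _ _ (hA1 x) (hA2 x) hβ hβL
  have hAadd : ∀ x y : horizSub L W, A (x + y) = A x + A y := by
    intro x y
    refine (hAeq (x + y) (A x + A y) (Submodule.add_mem _ (hA1 x) (hA1 y)) ?_).symm
    simpa using L.add_mem (hA2 x) (hA2 y)
  have hAsmul : ∀ (c : ℝ) (x : horizSub L W), A (c • x) = c • A x := by
    intro c x
    refine (hAeq (c • x) (c • A x) (Submodule.smul_mem _ _ (hA1 x)) ?_).symm
    simpa using L.smul_mem c (hA2 x)
  refine ⟨LinearMap.mk₂ ℝ (fun x y => A x (y : V))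
    (fun x y z => by simp only [hAadd]; simp)
    (fun c x y => by simp only [hAsmul]; simp)
    (fun x y z => by simp)
    (fun c x y => by simp), ?_, ?_⟩
  · intro x₁ x₂ α₁ hα₁ hα₁L
    simp only [LinearMap.mk₂_apply]
    rw [hAeq x₁ α₁ hα₁ hα₁L]
  · intro x₁ x₂
    simp only [LinearMap.mk₂_apply]
    exact skew _ _ _ _ (hA1 x₁) (hA1 x₂) (hA2 x₁) (hA2 x₂)
end

section
/- Let L ⊆ V ⊕ V* be maximal isotropic with (W ⊕ W⁰) ∩ L = {0}, H := {X ∈ V : ∃ α ∈ W⁰, (X,α) ∈ L}, and H⁰ its annihilator. Then for every α ∈ H⁰ there exists a unique X ∈ W with (X,α) ∈ L, and π(α₁,α₂) := α₁(X₂) (where (X_i,α_i) ∈ L, X_i ∈ W) defines a skew-symmetric bilinear form on H⁰. -/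
open Module

section Aux

set_option linter.unusedSectionVars false

variable {V : Type*} [AddCommGroup V] [Module ℝ V]

lemma pairPlus_add_left (p q r : V × Module.Dual ℝ V) :
    pairPlus (p + q) r = pairPlus p r + pairPlus q r := by
  simp only [pairPlus, Prod.fst_add, Prod.snd_add, LinearMap.add_apply, map_add]
  ring

lemma pairPlus_smul_left (c : ℝ) (p r : V × Module.Dual ℝ V) :
    pairPlus (c • p) r = c * pairPlus p r := by
  simp only [pairPlus, Prod.smul_fst, Prod.smul_snd, LinearMap.smul_apply, map_smul,
    smul_eq_mul]
  ring

lemma pairPlus_comm (p q : V × Module.Dual ℝ V) : pairPlus p q = pairPlus q p := by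
  simp only [pairPlus]; ring

lemma pairPlus_add_right (p q r : V × Module.Dual ℝ V) :
    pairPlus p (q + r) = pairPlus p q + pairPlus p r := by
  rw [pairPlus_comm, pairPlus_add_left, pairPlus_comm q, pairPlus_comm r]

lemma pairPlus_smul_right (c : ℝ) (p r : V × Module.Dual ℝ V) :
    pairPlus p (c • r) = c * pairPlus p r := by
  rw [pairPlus_comm, pairPlus_smul_left, pairPlus_comm r]

lemma mem_of_perp {L : Submodule ℝ (V × Module.Dual ℝ V)} (hL : IsMaxIsotropicP L)
    {p : V × Module.Dual ℝ V} (hpp : pairPlus p p = 0)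
    (hperp : ∀ q ∈ L, pairPlus p q = 0) : p ∈ L := by
  have hiso : IsIsotropicP (L ⊔ Submodule.span ℝ {p}) := by
    intro a ha b hb
    rw [Submodule.mem_sup] at ha hb
    obtain ⟨qa, hqa, ra, hra, rfl⟩ := ha
    obtain ⟨qb, hqb, rb, hrb, rfl⟩ := hb
    rw [Submodule.mem_span_singleton] at hra hrb
    obtain ⟨c, rfl⟩ := hra
    obtain ⟨d, rfl⟩ := hrb
    rw [pairPlus_add_left, pairPlus_smul_left, pairPlus_add_right, pairPlus_smul_right,
      pairPlus_add_right, pairPlus_smul_right]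
    rw [hL.1 qa hqa qb hqb, hperp qb hqb, pairPlus_comm qa p, hperp qa hqa, hpp]
    ring
  have := hL.2 _ hiso le_sup_left
  rw [this]
  exact Submodule.mem_sup_right (Submodule.mem_span_singleton_self p)

variable [FiniteDimensional ℝ V]

lemma perp_mem {L : Submodule ℝ (V × Module.Dual ℝ V)} (hL : IsMaxIsotropicP L)
    {p : V × Module.Dual ℝ V} (hperp : ∀ q ∈ L, pairPlus p q = 0) : p ∈ L := by
  obtain ⟨X, α⟩ := p
  set E : Submodule ℝ V := L.map (LinearMap.fst ℝ V (Module.Dual ℝ V)) with hEdef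
  have hE : X ∈ E := by
    have hXmem : X ∈ E.dualAnnihilator.dualCoannihilator := by
      rw [Submodule.mem_dualCoannihilator]
      intro δ hδ
      rw [Submodule.mem_dualAnnihilator] at hδ
      have hδL : ((0 : V), δ) ∈ L := by
        apply mem_of_perp hL
        · simp [pairPlus]
        · intro q hq
          have hq1 : q.1 ∈ E := ⟨q, hq, rfl⟩
          simp [pairPlus, hδ q.1 hq1]
      have := hperp _ hδL
      simp only [pairPlus] at this
      simp only [map_zero] at this
      linarith
    rwa [Subspace.dualAnnihilator_dualCoannihilator_eq] at hXmem
  obtain ⟨⟨X', γ⟩, hγL, rfl⟩ := hE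
  simp only [LinearMap.fst_apply] at hperp ⊢
  have h0 : ((0 : V), α - γ) ∈ L := by
    apply mem_of_perp hL
    · simp [pairPlus]
    · intro q hq
      have h1 := hperp q hq
      have h2 := hL.1 _ hγL q hq
      simp only [pairPlus, map_zero, LinearMap.sub_apply] at *
      linarith
  have : (X', α) = (X', γ) + ((0 : V), α - γ) := by
    ext <;> simp
  rw [this]
  exact L.add_mem hγL h0

lemma exists_vert {L : Submodule ℝ (V × Module.Dual ℝ V)} {W : Submodule ℝ V}
    (hL : IsMaxIsotropicP L) {α : Module.Dual ℝ V}
    (hα : α ∈ (horizSub L W).dualAnnihilator) : ∃ X ∈ W, (X, α) ∈ L := by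
  haveI : Module.Free ℝ L := Module.Free.of_divisionRing ℝ L
  haveI : IsReflexive ℝ L := Module.IsReflexive.of_finite_of_free ℝ L
  set g : L →ₗ[ℝ] Module.Dual ℝ V :=
    (LinearMap.snd ℝ V (Module.Dual ℝ V)).comp L.subtype with hg
  set Φ : V →ₗ[ℝ] Module.Dual ℝ L :=
    g.dualMap.comp (Module.Dual.eval ℝ V) with hΦ
  set f : Module.Dual ℝ L :=
    -(α.comp ((LinearMap.fst ℝ V (Module.Dual ℝ V)).comp L.subtype)) with hf
  have hΦapp : ∀ (X : V) (p : L), Φ X p = (p : V × Module.Dual ℝ V).2 X := by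
    intro X p; rfl
  have hfapp : ∀ p : L, f p = -(α (p : V × Module.Dual ℝ V).1) := by
    intro p; rfl
  have hfmem : f ∈ W.map Φ := by
    rw [← Subspace.dualAnnihilator_dualCoannihilator_eq (W := W.map Φ),
      Submodule.mem_dualCoannihilator]
    intro φ hφ
    rw [Submodule.mem_dualAnnihilator] at hφ
    obtain ⟨p, rfl⟩ := (Module.evalEquiv ℝ L).surjective φ
    have hp2 : (p : V × Module.Dual ℝ V).2 ∈ W.dualAnnihilator := by
      rw [Submodule.mem_dualAnnihilator]
      intro w hw
      have := hφ (Φ w) ⟨w, hw, rfl⟩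
      rwa [Module.evalEquiv_apply, Module.Dual.eval_apply, hΦapp] at this
    have hH : (p : V × Module.Dual ℝ V).1 ∈ horizSub L W :=
      ⟨(p : V × Module.Dual ℝ V).2, hp2, p.2⟩
    rw [Module.evalEquiv_apply, Module.Dual.eval_apply, hfapp]
    rw [Submodule.mem_dualAnnihilator] at hα
    rw [hα _ hH, neg_zero]
  obtain ⟨X, hXW, hΦX⟩ := hfmem
  refine ⟨X, hXW, perp_mem hL ?_⟩
  intro q hq
  have := congrArg (fun ψ : Module.Dual ℝ L => ψ ⟨q, hq⟩) hΦX
  simp only [hΦapp, hfapp] at this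
  simp only [pairPlus, this]
  ring

end Aux

/-- If `L` is maximal isotropic with `(W ⊕ W⁰) ∩ L = 0`,
`H = {X : ∃ α ∈ W⁰, (X,α) ∈ L}` and `H⁰` its annihilator, then every
`α ∈ H⁰` admits a unique `X ∈ W` with `(X,α) ∈ L`, and
`π(α₁,α₂) := α₁(X₂)` defines a skew-symmetric bilinear form on `H⁰`. -/
theorem vertical_bivector_wellDefined_skew
    {V : Type*} [AddCommGroup V] [Module ℝ V] [FiniteDimensional ℝ V]
    (L : Submodule ℝ (V × Module.Dual ℝ V)) (W : Submodule ℝ V)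
    (hL : IsMaxIsotropicP L)
    (hnd : W.prod W.dualAnnihilator ⊓ L = ⊥) :
    (∀ α ∈ (horizSub L W).dualAnnihilator,
      ∃! X : V, X ∈ W ∧ (X, α) ∈ L) ∧
    (∃ π : (horizSub L W).dualAnnihilator →ₗ[ℝ]
        (horizSub L W).dualAnnihilator →ₗ[ℝ] ℝ,
      (∀ (α₁ α₂ : (horizSub L W).dualAnnihilator) (X₂ : V),
        X₂ ∈ W → (X₂, (α₂ : Module.Dual ℝ V)) ∈ L →
        π α₁ α₂ = (α₁ : Module.Dual ℝ V) X₂) ∧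
      (∀ α₁ α₂, π α₁ α₂ = -π α₂ α₁)) := by
  have huniq : ∀ (α : Module.Dual ℝ V) (X Y : V), X ∈ W → Y ∈ W →
      (X, α) ∈ L → (Y, α) ∈ L → X = Y := by
    intro α X Y hX hY hXL hYL
    have hmem : ((X - Y, (0 : Module.Dual ℝ V)) : V × Module.Dual ℝ V) ∈
        W.prod W.dualAnnihilator ⊓ L := by
      rw [Submodule.mem_inf]
      constructor
      · exact Submodule.mem_prod.mpr ⟨sub_mem hX hY, Submodule.zero_mem _⟩
      · have h : ((X - Y, (0 : Module.Dual ℝ V)) : V × Module.Dual ℝ V)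
            = (X, α) - (Y, α) := by simp [Prod.ext_iff]
        rw [h]; exact L.sub_mem hXL hYL
    rw [hnd, Submodule.mem_bot, Prod.ext_iff] at hmem
    have := hmem.1
    simpa [sub_eq_zero] using this
  have hex : ∀ α ∈ (horizSub L W).dualAnnihilator, ∃! X : V, X ∈ W ∧ (X, α) ∈ L := by
    intro α hα
    obtain ⟨X, hXW, hXL⟩ := exists_vert hL hα
    exact ⟨X, ⟨hXW, hXL⟩, fun Y hY => huniq α Y X hY.1 hXW hY.2 hXL⟩
  refine ⟨hex, ?_⟩
  choose ξ₀ hξ₀ using fun α : (horizSub L W).dualAnnihilator => (hex α.1 α.2).exists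
  have hunique : ∀ (α : (horizSub L W).dualAnnihilator) (X : V),
      X ∈ W → (X, (α : Module.Dual ℝ V)) ∈ L → ξ₀ α = X :=
    fun α X hX hXL => huniq α.1 _ X (hξ₀ α).1 hX (hξ₀ α).2 hXL
  have hadd : ∀ a b, ξ₀ (a + b) = ξ₀ a + ξ₀ b := by
    intro a b
    apply hunique
    · exact add_mem (hξ₀ a).1 (hξ₀ b).1
    · have h : ((ξ₀ a + ξ₀ b, ((a + b : _) : Module.Dual ℝ V)) : V × Module.Dual ℝ V)
          = (ξ₀ a, (a : Module.Dual ℝ V)) + (ξ₀ b, (b : Module.Dual ℝ V)) := by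
        simp [Prod.ext_iff]
      rw [h]; exact L.add_mem (hξ₀ a).2 (hξ₀ b).2
  have hsmul : ∀ (c : ℝ) a, ξ₀ (c • a) = c • ξ₀ a := by
    intro c a
    apply hunique
    · exact Submodule.smul_mem _ _ (hξ₀ a).1
    · have h : ((c • ξ₀ a, ((c • a : _) : Module.Dual ℝ V)) : V × Module.Dual ℝ V)
          = c • (ξ₀ a, (a : Module.Dual ℝ V)) := by
        simp [Prod.ext_iff]
      rw [h]; exact L.smul_mem c (hξ₀ a).2
  let ξ : (horizSub L W).dualAnnihilator →ₗ[ℝ] V :=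
    { toFun := ξ₀, map_add' := hadd, map_smul' := hsmul }
  refine ⟨LinearMap.mk₂ ℝ (fun a b => (a : Module.Dual ℝ V) (ξ b)) ?_ ?_ ?_ ?_, ?_, ?_⟩
  · intro a a' b; simp
  · intro c a b; simp
  · intro a b b'; simp
  · intro c a b; simp
  · intro α₁ α₂ X₂ hXW hXL
    have h2 : ξ₀ α₂ = X₂ := hunique α₂ X₂ hXW hXL
    simp only [LinearMap.mk₂_apply]
    show (α₁ : Module.Dual ℝ V) (ξ₀ α₂) = _
    rw [h2]
  · intro α₁ α₂
    simp only [LinearMap.mk₂_apply]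
    show (α₁ : Module.Dual ℝ V) (ξ₀ α₂) = -(α₂ : Module.Dual ℝ V) (ξ₀ α₁)
    have h := hL.1 _ (hξ₀ α₁).2 _ (hξ₀ α₂).2
    simp only [pairPlus] at h
    linarith
end

section
/- Let V = H ⊕ W be a direct sum decomposition of a finite-dimensional real vector space, ω a skew-symmetric bilinear form on H, and π a skew-symmetric bilinear form on H⁰ ≅ W*. Then L := {(X + π♯(α), ι_X ω + α) : X ∈ H, α ∈ H⁰} is a maximal isotropic subspace of V ⊕ V* satisfying (W ⊕ W⁰) ∩ L = {0}. Here ι_X ω is extended to an element of V* via the annihilator identification H* ≅ W⁰, and π♯(α) ∈ W via W ≅ (H⁰)*. -/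
open Module

/-!
The map `(X, α) ↦ (X + π♯ α, ι_X ω + α)` differs from the identity by a vector of `K = W ⊕ W⁰`,
so it carries the complement `H ⊕ H⁰` of `K` to a complement `L` of `K`. Skew-symmetry of `ω` and
`π` makes `L` isotropic, and an isotropic complement of `K` is maximal as soon as no nonzero vector
of `K` is orthogonal to it: a vector of an isotropic `L' ⊇ L` splits as `l + k`, and then `k` is
orthogonal to `L`.
-/

open Submodule

namespace Submodule

variable {R M M' : Type*} [Ring R] [AddCommGroup M] [Module R M] [AddCommGroup M'] [Module R M']

lemma isCompl_prod {p q : Submodule R M} {p' q' : Submodule R M'} (h : IsCompl p q)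
    (h' : IsCompl p' q') : IsCompl (p.prod p') (q.prod q') := by
  rw [isCompl_iff, disjoint_iff, codisjoint_iff, prod_inf_prod, prod_sup_prod, h.inf_eq_bot,
    h'.inf_eq_bot, h.sup_eq_top, h'.sup_eq_top, prod_bot, prod_top]
  exact ⟨rfl, rfl⟩

lemma isCompl_map_of_sub_mem {p K : Submodule R M} (h : IsCompl p K) (f : M →ₗ[R] M)
    (hf : ∀ x, f x - x ∈ K) : IsCompl (p.map f) K := by
  constructor
  · rw [disjoint_def]
    rintro _ ⟨x, hx, rfl⟩ hfx
    have hxK : x ∈ K := by simpa using K.sub_mem hfx (hf x)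
    obtain rfl : x = 0 := disjoint_def.mp h.disjoint x hx hxK
    exact map_zero f
  · rw [codisjoint_iff_exists_add_eq]
    intro z
    obtain ⟨m, k, hm, hk, rfl⟩ := codisjoint_iff_exists_add_eq.mp h.codisjoint z
    refine ⟨f m, m - f m + k, mem_map_of_mem hm, K.add_mem ?_ hk, by abel⟩
    simpa using K.neg_mem (hf m)

end Submodule

section Field

variable {K V : Type*} [Field K] [AddCommGroup V] [Module K V] [FiniteDimensional K V]

lemma Module.evalEquiv_symm_mem {W : Submodule K V} {φ : Dual K (Dual K V)}
    (h : ∀ b ∈ W.dualAnnihilator, φ b = 0) : (evalEquiv K V).symm φ ∈ W := by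
  rw [← Subspace.forall_mem_dualAnnihilator_apply_eq_zero_iff]
  simpa using h

/-- `(X, α) ↦ (X + π♯ α, ι_X ω + α)`. -/
noncomputable def geometricDataMap (ω : V →ₗ[K] Dual K V)
    (π : Dual K V →ₗ[K] Dual K (Dual K V)) : V × Dual K V →ₗ[K] V × Dual K V :=
  LinearMap.id + ((evalEquiv K V).symm.toLinearMap ∘ₗ π ∘ₗ LinearMap.snd K V _).prod
    (ω ∘ₗ LinearMap.fst K V _)

@[simp]
lemma geometricDataMap_apply (ω : V →ₗ[K] Dual K V) (π : Dual K V →ₗ[K] Dual K (Dual K V))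
    (p : V × Dual K V) :
    geometricDataMap ω π p = (p.1 + (evalEquiv K V).symm (π p.2), ω p.1 + p.2) := by
  ext <;> simp [geometricDataMap, add_comm]

end Field

section Real

variable {V : Type*} [AddCommGroup V] [Module ℝ V]

lemma isMaxIsotropicP_of_codisjoint {L K : Submodule ℝ (V × Dual ℝ V)} (hL : IsIsotropicP L)
    (hLK : Codisjoint L K) (hK : ∀ k ∈ K, (∀ p ∈ L, pairPlus k p = 0) → k = 0) :
    IsMaxIsotropicP L := by
  refine ⟨hL, fun L' hL' hle => le_antisymm hle fun q hq => ?_⟩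
  obtain ⟨l, k, hl, hk, rfl⟩ := codisjoint_iff_exists_add_eq.mp hLK q
  have hkL' : k ∈ L' := by simpa using L'.sub_mem hq (hle hl)
  rw [hK k hk fun p hp => hL' k hkL' p (hle hp), add_zero]
  exact hl

variable [FiniteDimensional ℝ V] {H W : Submodule ℝ V} {ω : V →ₗ[ℝ] V →ₗ[ℝ] ℝ}
  {π : Dual ℝ V →ₗ[ℝ] Dual ℝ V →ₗ[ℝ] ℝ}

lemma isIsotropicP_map_geometricDataMap (hωskew : ∀ x y, ω x y = -ω y x)
    (hωW : ∀ x : V, ∀ w ∈ W, ω x w = 0) (hπskew : ∀ a b, π a b = -π b a)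
    (hπW : ∀ a : Dual ℝ V, ∀ b ∈ W.dualAnnihilator, π a b = 0) :
    IsIsotropicP ((H.prod H.dualAnnihilator).map (geometricDataMap ω π)) := by
  rintro _ ⟨⟨X, α⟩, ⟨hX, hα⟩, rfl⟩ _ ⟨⟨Y, β⟩, ⟨hY, hβ⟩, rfl⟩
  have hωX : π β (ω X) = 0 := hπW β _ ((mem_dualAnnihilator _).2 (hωW X))
  have hωY : π α (ω Y) = 0 := hπW α _ ((mem_dualAnnihilator _).2 (hωW Y))
  simp only [pairPlus, geometricDataMap_apply, LinearMap.add_apply, map_add,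
    apply_evalEquiv_symm_apply, hωX, hωY, (mem_dualAnnihilator α).1 hα Y hY,
    (mem_dualAnnihilator β).1 hβ X hX, hωskew X Y, hπskew β α]
  ring

/-- Pairing with `(X, ι_X ω)` kills the covector on `H`, then pairing with `(π♯ α, α)` puts the
vector in `H`. -/
lemma eq_zero_of_forall_pairPlus_map_geometricDataMap (hHW : IsCompl H W)
    (hωW : ∀ x : V, ∀ w ∈ W, ω x w = 0) {k : V × Dual ℝ V}
    (hk : k ∈ W.prod W.dualAnnihilator)
    (horth : ∀ p ∈ (H.prod H.dualAnnihilator).map (geometricDataMap ω π), pairPlus k p = 0) :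
    k = 0 := by
  obtain ⟨w, γ⟩ := k
  obtain ⟨hw, hγ⟩ := hk
  have hγH : γ ∈ H.dualAnnihilator := by
    refine (mem_dualAnnihilator γ).2 fun X hX => ?_
    have hXL : (X, 0) ∈ H.prod H.dualAnnihilator := ⟨hX, zero_mem _⟩
    simpa [pairPlus, hωW X w hw] using horth _ (mem_map_of_mem hXL)
  have hγ0 : γ = 0 := by
    simpa using disjoint_def.mp (Subspace.isCompl_dualAnnihilator hHW).disjoint γ hγH hγ
  subst hγ0
  have hwH : w ∈ H := by
    refine (Subspace.forall_mem_dualAnnihilator_apply_eq_zero_iff H w).1 fun α hα => ?_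
    have hαL : (0, α) ∈ H.prod H.dualAnnihilator := ⟨zero_mem _, hα⟩
    simpa [pairPlus] using horth _ (mem_map_of_mem hαL)
  simpa using disjoint_def.mp hHW.disjoint w hwH hw

end Real

/-- Given a splitting `V = H ⊕ W`, a skew form `ω` (the horizontal 2-form,
extended so that `ι_X ω ∈ W⁰`, i.e. `ω(·, w) = 0` for `w ∈ W`) and a skew
bivector `π` (the vertical bivector, extended so that it vanishes on `W⁰`),
the set `L = {(X + π♯(α), ι_X ω + α) : X ∈ H, α ∈ H⁰}` is a maximal isotropic
subspace of `V ⊕ V*` with `(W ⊕ W⁰) ∩ L = 0`; moreover `π♯(α) ∈ W` for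
`α ∈ H⁰` and `ι_X ω ∈ W⁰`. -/
theorem geometric_data_gives_maxIsotropic
    {V : Type*} [AddCommGroup V] [Module ℝ V] [FiniteDimensional ℝ V]
    (H W : Submodule ℝ V) (hHW : IsCompl H W)
    (ω : V →ₗ[ℝ] V →ₗ[ℝ] ℝ) (hωskew : ∀ x y, ω x y = -ω y x)
    (hωW : ∀ x : V, ∀ w ∈ W, ω x w = 0)
    (π : Module.Dual ℝ V →ₗ[ℝ] Module.Dual ℝ V →ₗ[ℝ] ℝ)
    (hπskew : ∀ a b, π a b = -π b a)
    (hπW : ∀ a : Module.Dual ℝ V, ∀ b ∈ W.dualAnnihilator, π a b = 0) :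
    ∃ L : Submodule ℝ (V × Module.Dual ℝ V),
      ((L : Set (V × Module.Dual ℝ V)) =
        {p | ∃ X ∈ H, ∃ α ∈ H.dualAnnihilator,
          p = (X + (Module.evalEquiv ℝ V).symm (π α), ω X + α)}) ∧
      (∀ α ∈ H.dualAnnihilator, (Module.evalEquiv ℝ V).symm (π α) ∈ W) ∧
      (∀ X : V, ω X ∈ W.dualAnnihilator) ∧
      IsMaxIsotropicP L ∧
      W.prod W.dualAnnihilator ⊓ L = ⊥ := by
  have hωW' : ∀ X, ω X ∈ W.dualAnnihilator := fun X => (mem_dualAnnihilator _).2 (hωW X)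
  have hπW' : ∀ α, (evalEquiv ℝ V).symm (π α) ∈ W := fun α => evalEquiv_symm_mem (hπW α)
  have hcompl : IsCompl ((H.prod H.dualAnnihilator).map (geometricDataMap ω π))
      (W.prod W.dualAnnihilator) :=
    isCompl_map_of_sub_mem (isCompl_prod hHW (Subspace.isCompl_dualAnnihilator hHW)) _
      fun p => by simpa using And.intro (hπW' p.2) (hωW' p.1)
  refine ⟨_, ?_, fun α _ => hπW' α, hωW', ?_, hcompl.symm.inf_eq_bot⟩
  · ext p
    simp only [SetLike.mem_coe, mem_map, mem_prod, Prod.exists, geometricDataMap_apply,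
      Set.mem_ofPred_eq]
    constructor
    · rintro ⟨X, α, ⟨hX, hα⟩, rfl⟩
      exact ⟨X, hX, α, hα, rfl⟩
    · rintro ⟨X, hX, α, hα, rfl⟩
      exact ⟨X, α, ⟨hX, hα⟩, rfl⟩
  · exact isMaxIsotropicP_of_codisjoint
      (isIsotropicP_map_geometricDataMap hωskew hωW hπskew hπW) hcompl.codisjoint
      fun k hk => eq_zero_of_forall_pairPlus_map_geometricDataMap hHW hωW hk
end

section
/- If L ⊆ V ⊕ V* is maximal isotropic with (W ⊕ W⁰) ∩ L = {0}, where (V, W) corresponds to (tangent space, vertical space), then the associated vertical bivector π_V is nondegenerate on H⁰ if and only if L is the graph of a skew-symmetric bilinear form ω on V whose restriction to W is nondegenerate; in that case the restriction of ω to W equals the inverse of π_V under the identification H⁰ ≅ W*. -/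
/-!
Maximality makes `L` equal to its orthogonal, so `L` contains `0 ⊕ (pr_V L)⁰` and hence
`dim L ≥ dim V`. Counting dimensions against `(W ⊕ W⁰) ∩ L = 0` then shows that every
`α ∈ H⁰` is the second component of some `(X, α) ∈ L` with `X ∈ W`, and consequently
`W⁰ ∩ H⁰ = 0`. If `π_V` is nondegenerate, any `(0, β) ∈ L` has `β ∈ H⁰` in the kernel of
`π_V`, so `L` meets `0 ⊕ V*` trivially and is the graph of a map `V → V*`, skew by isotropy.
Conversely, if `L` is the graph of `ω` then `π_V(α, ω w) = α(w)`, so the kernel of `π_V` lies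
in `W⁰ ∩ H⁰ = 0`.
-/

open Module

open Submodule

theorem LinearMap.finrank_map_add_finrank_inf_ker {K E F : Type*} [DivisionRing K]
    [AddCommGroup E] [Module K E] [AddCommGroup F] [Module K F]
    (f : E →ₗ[K] F) (p : Submodule K E) [FiniteDimensional K p] :
    finrank K (p.map f) + finrank K ↥(p ⊓ LinearMap.ker f) = finrank K p := by
  rw [← LinearMap.range_domRestrict, ← map_comap_subtype, finrank_map_subtype_eq,
    ← LinearMap.ker_domRestrict]
  exact (f.domRestrict p).finrank_range_add_finrank_ker

section Isotropic

variable {V : Type*} [AddCommGroup V] [Module ℝ V] {L : Submodule ℝ (V × Dual ℝ V)}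

theorem IsIsotropicP.apply_add_apply_eq_zero (hL : IsIsotropicP L) {p q : V × Dual ℝ V}
    (hp : p ∈ L) (hq : q ∈ L) : p.2 q.1 + q.2 p.1 = 0 := by
  simpa [pairPlus] using hL p hp q hq

theorem IsMaxIsotropicP.mem_of_forall_apply_add_apply_eq_zero (hL : IsMaxIsotropicP L)
    {v : V × Dual ℝ V} (hv : v.2 v.1 = 0) (horth : ∀ q ∈ L, v.2 q.1 + q.2 v.1 = 0) : v ∈ L := by
  have hiso : IsIsotropicP (L ⊔ ℝ ∙ v) := by
    intro p hp q hq
    obtain ⟨l, hl, _, hsv, rfl⟩ := mem_sup.mp hp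
    obtain ⟨l', hl', _, hsv', rfl⟩ := mem_sup.mp hq
    obtain ⟨c, rfl⟩ := mem_span_singleton.mp hsv
    obtain ⟨c', rfl⟩ := mem_span_singleton.mp hsv'
    simp only [pairPlus, Prod.fst_add, Prod.snd_add, Prod.smul_fst, Prod.smul_snd,
      LinearMap.add_apply, LinearMap.smul_apply, map_add, map_smul, smul_eq_mul]
    linear_combination (1 / 2 : ℝ) * hL.1.apply_add_apply_eq_zero hl hl' +
      (c' / 2) * horth l hl + (c / 2) * horth l' hl' + (c * c') * hv
  rw [hL.2 _ hiso le_sup_left]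
  exact mem_sup_right (mem_span_singleton_self v)

theorem IsMaxIsotropicP.zero_prod_mem (hL : IsMaxIsotropicP L) {β : Dual ℝ V}
    (hβ : β ∈ (L.map (LinearMap.fst ℝ V (Dual ℝ V))).dualAnnihilator) : ((0 : V), β) ∈ L :=
  hL.mem_of_forall_apply_add_apply_eq_zero (by simp) fun q hq => by
    simpa using (mem_dualAnnihilator β).1 hβ q.1 ⟨q, hq, rfl⟩

variable [FiniteDimensional ℝ V]

theorem IsMaxIsotropicP.finrank_le_finrank (hL : IsMaxIsotropicP L) :
    finrank ℝ V ≤ finrank ℝ L := by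
  have hfst := (LinearMap.fst ℝ V (Dual ℝ V)).finrank_map_add_finrank_inf_ker L
  set P := L.map (LinearMap.fst ℝ V (Dual ℝ V))
  have hker : P.dualAnnihilator.map (LinearMap.inr ℝ V (Dual ℝ V)) ≤
      L ⊓ LinearMap.ker (LinearMap.fst ℝ V (Dual ℝ V)) := by
    rintro _ ⟨β, hβ, rfl⟩
    exact ⟨hL.zero_prod_mem hβ, rfl⟩
  have hinr :=
    (LinearMap.inr ℝ V (Dual ℝ V)).finrank_map_add_finrank_inf_ker P.dualAnnihilator
  rw [ker_inr, inf_bot_eq, finrank_bot, add_zero] at hinr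
  have := Submodule.finrank_mono hker
  have := Subspace.finrank_add_finrank_dualAnnihilator_eq P
  omega

theorem IsMaxIsotropicP.finrank_le_finrank_inf_ker_add {F : Type*} [AddCommGroup F]
    [Module ℝ F] [FiniteDimensional ℝ F] (hL : IsMaxIsotropicP L) (g : V × Dual ℝ V →ₗ[ℝ] F) :
    finrank ℝ V ≤ finrank ℝ ↥(L ⊓ LinearMap.ker g) + finrank ℝ F := by
  have := g.finrank_map_add_finrank_inf_ker L
  have := (L.map g).finrank_le
  have := hL.finrank_le_finrank
  omega

theorem IsMaxIsotropicP.exists_skew_eq_graph (hL : IsMaxIsotropicP L)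
    (h0 : ∀ β : Dual ℝ V, ((0 : V), β) ∈ L → β = 0) :
    ∃ ω : V →ₗ[ℝ] Dual ℝ V, (∀ x y, ω x y = -ω y x) ∧ L = ω.graph := by
  have hsurj : L.map (LinearMap.fst ℝ V (Dual ℝ V)) = ⊤ := by
    rw [← dualAnnihilator_eq_bot_iff, eq_bot_iff]
    exact fun β hβ => h0 β (hL.zero_prod_mem hβ)
  have hbij : Function.Bijective (Prod.fst ∘ L.subtype) := by
    refine ⟨fun a b hab => ?_, fun x => ?_⟩
    · have hsub : ((0 : V), (a : V × Dual ℝ V).2 - (b : V × Dual ℝ V).2) ∈ L := by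
        convert L.sub_mem a.2 b.2 using 1
        exact Prod.ext (sub_eq_zero.mpr hab).symm rfl
      exact Subtype.ext (Prod.ext hab (sub_eq_zero.mp (h0 _ hsub)))
    · obtain ⟨p, hp, rfl⟩ := hsurj ▸ mem_top (x := x)
      exact ⟨⟨p, hp⟩, rfl⟩
  obtain ⟨ω, hω⟩ := exists_eq_graph hbij
  refine ⟨ω, fun x y => ?_, hω⟩
  have hxy := hL.1.apply_add_apply_eq_zero (p := (x, ω x)) (q := (y, ω y))
    (by rw [hω]; rfl) (by rw [hω]; rfl)
  simp only at hxy
  linarith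

end Isotropic

section Transversal

variable {V : Type*} [AddCommGroup V] [Module ℝ V] {L : Submodule ℝ (V × Dual ℝ V)}
  {W : Submodule ℝ V}

theorem apply_mem_dualAnnihilator_horizSub {ω : V →ₗ[ℝ] Dual ℝ V}
    (hskew : ∀ x y, ω x y = -ω y x) (hgraph : L = ω.graph) {w : V} (hw : w ∈ W) :
    ω w ∈ (horizSub L W).dualAnnihilator := by
  rw [mem_dualAnnihilator]
  rintro X ⟨γ, hγ, hXL⟩
  rw [hgraph, LinearMap.mem_graph_iff] at hXL
  rw [hskew, ← show γ = ω X from hXL, (mem_dualAnnihilator γ).1 hγ w hw, neg_zero]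

theorem eq_zero_of_eq_graph (hnd : W.prod W.dualAnnihilator ⊓ L = ⊥) {ω : V →ₗ[ℝ] Dual ℝ V}
    (hgraph : L = ω.graph) {w : V} (hw : w ∈ W) (hvan : ∀ w' ∈ W, ω w w' = 0) : w = 0 := by
  have : (w, ω w) ∈ W.prod W.dualAnnihilator ⊓ L :=
    ⟨⟨hw, (mem_dualAnnihilator (ω w)).2 hvan⟩, hgraph ▸ rfl⟩
  rw [hnd, mem_bot, Prod.mk_eq_zero] at this
  exact this.1

variable [FiniteDimensional ℝ V]

theorem finrank_le_finrank_horizSub_add (hL : IsMaxIsotropicP L)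
    (hnd : W.prod W.dualAnnihilator ⊓ L = ⊥) :
    finrank ℝ V ≤ finrank ℝ (horizSub L W) + finrank ℝ W := by
  set ψ := W.dualRestrict ∘ₗ LinearMap.snd ℝ V (Dual ℝ V)
  have hmem {p : V × Dual ℝ V} : p ∈ LinearMap.ker ψ ↔ p.2 ∈ W.dualAnnihilator := by
    rw [← W.dualRestrict_ker_eq_dualAnnihilator]; rfl
  have hH : (L ⊓ LinearMap.ker ψ).map (LinearMap.fst ℝ V (Dual ℝ V)) = horizSub L W := by
    ext X
    constructor
    · rintro ⟨p, ⟨hpL, hpψ⟩, rfl⟩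
      exact ⟨p.2, hmem.1 hpψ, hpL⟩
    · rintro ⟨α, hα, hαL⟩
      exact ⟨(X, α), ⟨hαL, hmem.2 hα⟩, rfl⟩
  have hinj : L ⊓ LinearMap.ker ψ ⊓ LinearMap.ker (LinearMap.fst ℝ V (Dual ℝ V)) = ⊥ := by
    rw [eq_bot_iff, ← hnd]
    rintro p ⟨⟨hpL, hpψ⟩, hp1⟩
    exact ⟨⟨(show p.1 = 0 from hp1) ▸ W.zero_mem, hmem.1 hpψ⟩, hpL⟩
  have hfst :=
    (LinearMap.fst ℝ V (Dual ℝ V)).finrank_map_add_finrank_inf_ker (L ⊓ LinearMap.ker ψ)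
  rw [hH, hinj, finrank_bot, add_zero] at hfst
  have := hL.finrank_le_finrank_inf_ker_add ψ
  rw [Subspace.dual_finrank_eq] at this
  omega

/-- The second projection maps `L ∩ (W ⊕ V*)` injectively into `H⁰`, and the dimension count
makes it onto. -/
theorem exists_mem_of_mem_dualAnnihilator_horizSub (hL : IsMaxIsotropicP L)
    (hnd : W.prod W.dualAnnihilator ⊓ L = ⊥) {α : Dual ℝ V}
    (hα : α ∈ (horizSub L W).dualAnnihilator) : ∃ X ∈ W, (X, α) ∈ L := by
  set χ := W.mkQ ∘ₗ LinearMap.fst ℝ V (Dual ℝ V)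
  have hmem {p : V × Dual ℝ V} : p ∈ LinearMap.ker χ ↔ p.1 ∈ W := by
    simp [χ]
  have hle : (L ⊓ LinearMap.ker χ).map (LinearMap.snd ℝ V (Dual ℝ V)) ≤
      (horizSub L W).dualAnnihilator := by
    rintro _ ⟨p, ⟨hpL, hpχ⟩, rfl⟩
    rw [mem_dualAnnihilator]
    rintro Y ⟨γ, hγ, hYL⟩
    have := hL.1.apply_add_apply_eq_zero hpL hYL
    rwa [(mem_dualAnnihilator γ).1 hγ _ (hmem.1 hpχ), add_zero] at this
  have hinj : L ⊓ LinearMap.ker χ ⊓ LinearMap.ker (LinearMap.snd ℝ V (Dual ℝ V)) = ⊥ := by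
    rw [eq_bot_iff, ← hnd]
    rintro p ⟨⟨hpL, hpχ⟩, hp2⟩
    exact ⟨⟨hmem.1 hpχ, (show p.2 = 0 from hp2) ▸ zero_mem _⟩, hpL⟩
  have hsnd :=
    (LinearMap.snd ℝ V (Dual ℝ V)).finrank_map_add_finrank_inf_ker (L ⊓ LinearMap.ker χ)
  rw [hinj, finrank_bot, add_zero] at hsnd
  have := hL.finrank_le_finrank_inf_ker_add χ
  have := W.finrank_quotient_add_finrank
  have := finrank_le_finrank_horizSub_add hL hnd
  have := Subspace.finrank_add_finrank_dualAnnihilator_eq (horizSub L W)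
  have hsurj := eq_of_le_of_finrank_le hle (by omega)
  obtain ⟨p, ⟨hpL, hpχ⟩, rfl⟩ := hsurj ▸ hα
  exact ⟨p.1, hmem.1 hpχ, hpL⟩

theorem eq_zero_of_mem_dualAnnihilator_horizSub (hL : IsMaxIsotropicP L)
    (hnd : W.prod W.dualAnnihilator ⊓ L = ⊥) {α : Dual ℝ V} (hαW : α ∈ W.dualAnnihilator)
    (hαH : α ∈ (horizSub L W).dualAnnihilator) : α = 0 := by
  obtain ⟨X, hXW, hXL⟩ := exists_mem_of_mem_dualAnnihilator_horizSub hL hnd hαH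
  have : (X, α) ∈ W.prod W.dualAnnihilator ⊓ L := ⟨⟨hXW, hαW⟩, hXL⟩
  rw [hnd, mem_bot, Prod.mk_eq_zero] at this
  exact this.2

end Transversal

/-- Let `L` be maximal isotropic with `(W ⊕ W⁰) ∩ L = 0` and let `π_V` be the
associated vertical bivector on `H⁰` (characterized by `π_V(α₁,α₂) = α₁(X₂)`
for the unique `X₂ ∈ W` with `(X₂,α₂) ∈ L`).  Then `π_V` is nondegenerate on
`H⁰` iff `L` is the graph of a skew-symmetric bilinear form `ω` on `V` whose
restriction to `W` is nondegenerate; and in that case the restriction of `ω`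
to `W` is the inverse of `π_V`, i.e. `π_V(α, ι_w ω) = α(w)`. -/
theorem vertical_nondegenerate_iff_graph_of_form
    {V : Type*} [AddCommGroup V] [Module ℝ V] [FiniteDimensional ℝ V]
    (L : Submodule ℝ (V × Module.Dual ℝ V)) (W : Submodule ℝ V)
    (hL : IsMaxIsotropicP L)
    (hnd : W.prod W.dualAnnihilator ⊓ L = ⊥)
    (πV : Module.Dual ℝ V →ₗ[ℝ] Module.Dual ℝ V →ₗ[ℝ] ℝ)
    (hπV : ∀ (α₁ α₂ : Module.Dual ℝ V) (X₂ : V),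
      α₁ ∈ (horizSub L W).dualAnnihilator →
      α₂ ∈ (horizSub L W).dualAnnihilator →
      X₂ ∈ W → (X₂, α₂) ∈ L → πV α₁ α₂ = α₁ X₂) :
    ((∀ α ∈ (horizSub L W).dualAnnihilator,
        (∀ β ∈ (horizSub L W).dualAnnihilator, πV α β = 0) → α = 0) ↔
      (∃ ω : V →ₗ[ℝ] V →ₗ[ℝ] ℝ,
        (∀ x y, ω x y = -ω y x) ∧
        ((L : Set (V × Module.Dual ℝ V)) = {p | p.2 = ω p.1}) ∧
        (∀ w ∈ W, (∀ w' ∈ W, ω w w' = 0) → w = 0))) ∧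
    (∀ ω : V →ₗ[ℝ] V →ₗ[ℝ] ℝ, (∀ x y, ω x y = -ω y x) →
      ((L : Set (V × Module.Dual ℝ V)) = {p | p.2 = ω p.1}) →
      ∀ α ∈ (horizSub L W).dualAnnihilator, ∀ w ∈ W, πV α (ω w) = α w) := by
  have hinverse : ∀ ω : V →ₗ[ℝ] Dual ℝ V, (∀ x y, ω x y = -ω y x) → L = ω.graph →
      ∀ α ∈ (horizSub L W).dualAnnihilator, ∀ w ∈ W, πV α (ω w) = α w :=
    fun ω hskew hgraph α hα w hw => hπV α (ω w) w hα
      (apply_mem_dualAnnihilator_horizSub hskew hgraph hw) hw (hgraph ▸ rfl)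
  refine ⟨⟨fun hnondeg => ?_, ?_⟩,
    fun ω hskew hgraph => hinverse ω hskew (SetLike.coe_injective hgraph)⟩
  · have hvert : ∀ β : Dual ℝ V, ((0 : V), β) ∈ L → β = 0 := by
      intro β hβ
      have hβH : β ∈ (horizSub L W).dualAnnihilator :=
        (mem_dualAnnihilator β).2 fun Y ⟨_, _, hYL⟩ => by
          simpa using hL.1.apply_add_apply_eq_zero hβ hYL
      refine hnondeg β hβH fun γ hγ => ?_
      obtain ⟨X, hXW, hXL⟩ := exists_mem_of_mem_dualAnnihilator_horizSub hL hnd hγ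
      rw [hπV β γ X hβH hγ hXW hXL]
      simpa using hL.1.apply_add_apply_eq_zero hβ hXL
    obtain ⟨ω, hskew, hgraph⟩ := hL.exists_skew_eq_graph hvert
    exact ⟨ω, hskew, hgraph ▸ rfl, fun w hw => eq_zero_of_eq_graph hnd hgraph hw⟩
  · rintro ⟨ω, hskew, hgraph, -⟩ α hα hvan
    replace hgraph : L = ω.graph := SetLike.coe_injective hgraph
    refine eq_zero_of_mem_dualAnnihilator_horizSub hL hnd
      ((mem_dualAnnihilator α).2 fun w hw => ?_) hα
    rw [← hinverse ω hskew hgraph α hα w hw]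
    exact hvan _ (apply_mem_dualAnnihilator_horizSub hskew hgraph hw)
end

section
/- If L ⊆ V ⊕ V* is maximal isotropic with (W ⊕ W⁰) ∩ L = {0} and the associated horizontal 2-form ω_H is nondegenerate on H, then L is the graph of a skew-symmetric bivector π on V*, namely L = {(π♯(ξ), ξ) : ξ ∈ V*}, and π = (ω_H)⁻¹ ⊕ π_V under the splittings V = H ⊕ W, V* = W⁰ ⊕ H⁰. -/
open Module

/-- Let `L` be maximal isotropic with `(W ⊕ W⁰) ∩ L = 0`, with associated
horizontal space `H`, horizontal 2-form `ω_H` (characterized by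
`ω_H(X₁,X₂) = α₁(X₂)` for the unique `α₁ ∈ W⁰` with `(X₁,α₁) ∈ L`) and
vertical bivector `π_V`.  If `ω_H` is nondegenerate on `H`, then `L` is the
graph of a skew-symmetric bivector `π` on `V*`, i.e.
`L = {(π♯(ξ), ξ) : ξ ∈ V*}`, and `π = (ω_H)⁻¹ ⊕ π_V` with respect to the
splittings `V = H ⊕ W`, `V* = W⁰ ⊕ H⁰`. -/
theorem horizontal_nondegenerate_graph_of_bivector
    {V : Type*} [AddCommGroup V] [Module ℝ V] [FiniteDimensional ℝ V]
    (L : Submodule ℝ (V × Module.Dual ℝ V)) (W : Submodule ℝ V)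
    (hL : IsMaxIsotropicP L)
    (hnd : W.prod W.dualAnnihilator ⊓ L = ⊥)
    (ωH : V →ₗ[ℝ] V →ₗ[ℝ] ℝ)
    (hωH : ∀ (X₁ X₂ : V) (α₁ : Module.Dual ℝ V),
      α₁ ∈ W.dualAnnihilator → (X₁, α₁) ∈ L → X₂ ∈ horizSub L W →
      ωH X₁ X₂ = α₁ X₂)
    (πV : Module.Dual ℝ V →ₗ[ℝ] Module.Dual ℝ V →ₗ[ℝ] ℝ)
    (hπV : ∀ (α₁ α₂ : Module.Dual ℝ V) (X₂ : V),
      α₁ ∈ (horizSub L W).dualAnnihilator →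
      α₂ ∈ (horizSub L W).dualAnnihilator →
      X₂ ∈ W → (X₂, α₂) ∈ L → πV α₁ α₂ = α₁ X₂)
    (hndH : ∀ X ∈ horizSub L W,
      (∀ Y ∈ horizSub L W, ωH X Y = 0) → X = 0) :
    ∃ π : Module.Dual ℝ V →ₗ[ℝ] Module.Dual ℝ V →ₗ[ℝ] ℝ,
      (∀ a b, π a b = -π b a) ∧
      ((L : Set (V × Module.Dual ℝ V)) =
        {p | p.1 = (Module.evalEquiv ℝ V).symm (π.flip p.2)}) ∧
      (∀ α ∈ W.dualAnnihilator,
        (Module.evalEquiv ℝ V).symm (π.flip α) ∈ horizSub L W ∧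
        ∀ X ∈ horizSub L W,
          ωH ((Module.evalEquiv ℝ V).symm (π.flip α)) X = α X) ∧
      (∀ α ∈ (horizSub L W).dualAnnihilator,
        (Module.evalEquiv ℝ V).symm (π.flip α) ∈ W) ∧
      (∀ α ∈ W.dualAnnihilator, ∀ β ∈ (horizSub L W).dualAnnihilator,
        π α β = 0 ∧ π β α = 0) ∧
      (∀ α ∈ (horizSub L W).dualAnnihilator,
        ∀ β ∈ (horizSub L W).dualAnnihilator, π α β = πV α β) := by
  
  classical
  obtain ⟨hLiso, hLmax⟩ := hL
  set H := horizSub L W with hH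
  -- (X,0) ∈ L → X = 0
  have hfst0 : ∀ X : V, (X, (0 : Module.Dual ℝ V)) ∈ L → X = 0 := by
    intro X hX
    have hXH : X ∈ H := ⟨0, Submodule.zero_mem _, hX⟩
    refine hndH X hXH fun Y hY => ?_
    rw [hωH X Y 0 (Submodule.zero_mem _) hX hY]
    rfl
  -- uniqueness of first component
  have huniq : ∀ (X X' : V) (ξ : Module.Dual ℝ V),
      (X, ξ) ∈ L → (X', ξ) ∈ L → X = X' := by
    intro X X' ξ h1 h2
    have : (X - X', (0 : Module.Dual ℝ V)) ∈ L := by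
      have := L.sub_mem h1 h2
      simpa using this
    have := hfst0 _ this
    exact sub_eq_zero.mp this
  -- surjectivity of second projection
  have hsurj : ∀ ξ : Module.Dual ℝ V, ∃ X : V, (X, ξ) ∈ L := by
    intro ξ
    set S : Submodule ℝ (Module.Dual ℝ V) := L.map (LinearMap.snd ℝ V _) with hS
    suffices hStop : S = ⊤ by
      have : ξ ∈ S := hStop ▸ Submodule.mem_top
      obtain ⟨p, hp, hp2⟩ := this
      exact ⟨p.1, by rw [← hp2]; exact hp⟩
    by_contra hne
    -- find X ≠ 0 annihilated by S
    have hco : S.dualCoannihilator ≠ ⊥ := by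
      intro hbot
      apply hne
      have h1 := Subspace.finrank_add_finrank_dualCoannihilator_eq S
      rw [hbot, finrank_bot] at h1
      apply Submodule.eq_top_of_finrank_eq
      rw [Subspace.dual_finrank_eq]
      omega
    obtain ⟨X, hXS, hX0⟩ := Submodule.exists_mem_ne_zero_of_ne_bot hco
    rw [Submodule.mem_dualCoannihilator] at hXS
    have hXL : ∀ q ∈ L, q.2 X = 0 := fun q hq =>
      hXS q.2 ⟨q, hq, rfl⟩
    -- L ⊔ span {(X,0)} is isotropic
    have hiso : IsIsotropicP (L ⊔ Submodule.span ℝ {((X, 0) : V × Module.Dual ℝ V)}) := by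
      intro p hp q hq
      rw [Submodule.mem_sup] at hp hq
      obtain ⟨a, ha, x, hx, rfl⟩ := hp
      obtain ⟨b, hb, y, hy, rfl⟩ := hq
      rw [Submodule.mem_span_singleton] at hx hy
      obtain ⟨c, rfl⟩ := hx
      obtain ⟨d, rfl⟩ := hy
      have h1 := hLiso a ha b hb
      have h2 := hXL a ha
      have h3 := hXL b hb
      simp only [pairPlus, Prod.smul_mk, Prod.fst_add, Prod.snd_add, Prod.smul_fst,
        Prod.smul_snd, smul_zero, add_zero, map_add, map_smul, smul_eq_mul] at h1 ⊢
      rw [h2, h3] at *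
      nlinarith [h1]
    have heq := hLmax _ hiso le_sup_left
    have hXmem : ((X, 0) : V × Module.Dual ℝ V) ∈ L := by
      rw [heq]
      exact Submodule.mem_sup_right (Submodule.mem_span_singleton_self _)
    exact hX0 (hfst0 X hXmem)
  have hexu : ∀ ξ : Module.Dual ℝ V, ∃ X : V, (X, ξ) ∈ L := hsurj
  choose B hB using hexu
  have hBadd : ∀ a b, B (a + b) = B a + B b := fun a b =>
    huniq _ _ _ (hB (a + b)) (L.add_mem (hB a) (hB b))
  have hBsmul : ∀ (c : ℝ) a, B (c • a) = c • B a := fun c a =>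
    huniq _ _ _ (hB (c • a)) (L.smul_mem c (hB a))
  set π : Module.Dual ℝ V →ₗ[ℝ] Module.Dual ℝ V →ₗ[ℝ] ℝ :=
    LinearMap.mk₂ ℝ (fun a b => a (B b))
      (fun a a' b => by simp)
      (fun c a b => by simp)
      (fun a b b' => by show a (B (b + b')) = a (B b) + a (B b'); rw [hBadd]; simp)
      (fun c a b => by show a (B (c • b)) = c * a (B b); rw [hBsmul]; simp) with hπ
  have hπapp : ∀ a b, π a b = a (B b) := fun a b => rfl
  have hBeq : ∀ ξ, (Module.evalEquiv ℝ V).symm (π.flip ξ) = B ξ := by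
    intro ξ
    rw [LinearEquiv.symm_apply_eq]
    ext a
    simp [Module.evalEquiv_apply, Module.Dual.eval_apply, hπapp]
  have hBW : ∀ β ∈ H.dualAnnihilator, B β ∈ W := by
    intro β hβ
    rw [← (Subspace.dualAnnihilator_dualCoannihilator_eq (W := W))]
    rw [Submodule.mem_dualCoannihilator]
    intro γ hγ
    have hiso := hLiso _ (hB β) _ (hB γ)
    simp only [pairPlus] at hiso
    have hBγH : B γ ∈ H := ⟨γ, hγ, hB γ⟩
    have : β (B γ) = 0 := by
      rw [Submodule.mem_dualAnnihilator] at hβ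
      exact hβ _ hBγH
    linarith
  refine ⟨π, ?_, ?_, ?_, ?_, ?_, ?_⟩
  · -- skew
    intro a b
    have := hLiso _ (hB a) _ (hB b)
    simp only [pairPlus] at this
    rw [hπapp, hπapp]
    linarith
  · -- graph
    ext p
    simp only [SetLike.mem_coe, Set.mem_setOf_eq, hBeq]
    constructor
    · intro hp
      exact huniq _ _ _ (by simpa [Prod.ext_iff] using hp) (hB p.2)
    · intro hp
      have := hB p.2
      rwa [← hp, Prod.mk.eta] at this
  · -- α ∈ W⁰
    intro α hα
    rw [hBeq]
    have hBH : B α ∈ H := ⟨α, hα, hB α⟩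
    exact ⟨hBH, fun X hX => hωH (B α) X α hα (hB α) hX⟩
  · -- α ∈ H⁰ → B α ∈ W
    intro α hα
    rw [hBeq]
    exact hBW α hα
  · -- cross terms vanish
    intro α hα β hβ
    constructor
    · rw [hπapp]
      rw [Submodule.mem_dualAnnihilator] at hα
      exact hα _ (hBW β hβ)
    · rw [hπapp]
      have hBαH : B α ∈ H := ⟨α, hα, hB α⟩
      rw [Submodule.mem_dualAnnihilator] at hβ
      exact hβ _ hBαH
  · -- π = πV on H⁰
    intro α hα β hβ
    rw [hπapp, hπV α β (B β) hα hβ (hBW β hβ) (hB β)]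
end

section
/- Let X^ε_t and Y^t_ε be two families of time-dependent smooth vector fields on a manifold M (ε,t ∈ [0,1]) such that the vector fields ∂/∂t + X and ∂/∂ε + Y on M × [0,1] × [0,1] commute (equivalently dX/dε − dY/dt = [X,Y] pointwise in (t,ε)). Assume all flows exist. Then the time-dependent flows satisfy φ^{X^ε}_{t,0} ∘ φ^{Y^0}_{ε,0} = φ^{Y^t}_{ε,0} ∘ φ^{X^0}_{t,0} for all t,ε ∈ [0,1]. -/
open Set

section Aux
variable {E : Type*} [NormedAddCommGroup E] [NormedSpace ℝ E]
  {F : Type*} [NormedAddCommGroup F] [NormedSpace ℝ F]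

/-- Grönwall: a function vanishing at 0 whose derivative is linearly bounded vanishes on `[0,1]`. -/
theorem aux_gronwall_zero {f f' : ℝ → E} {K : ℝ}
    (hd : ∀ s, HasDerivAt f (f' s) s) (h0 : f 0 = 0)
    (hb : ∀ s ∈ Icc (0:ℝ) 1, ‖f' s‖ ≤ K * ‖f s‖) :
    ∀ s ∈ Icc (0:ℝ) 1, f s = 0 := by
  intro s hs
  have := norm_le_gronwallBound_of_norm_deriv_right_le (f := f) (f' := f') (δ := 0) (K := K)
    (ε := 0) (a := 0) (b := 1)
    (fun x _ => (hd x).continuousAt.continuousWithinAt)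
    (fun x _ => (hd x).hasDerivWithinAt) (by simp [h0])
    (fun x hx => by simpa using hb x ⟨hx.1, hx.2.le⟩) s hs
  rw [gronwallBound_ε0_δ0] at this
  exact norm_le_zero_iff.mp this

/-- partial derivative in the first variable. -/
theorem aux_hasDerivAt_fst {g : ℝ × ℝ × E → F} (hg : Differentiable ℝ g) (a b : ℝ) (c : E) :
    HasDerivAt (fun s => g (s, b, c)) (fderiv ℝ g (a, b, c) (1, 0, 0)) a :=
  (hg (a, b, c)).hasFDerivAt.comp_hasDerivAt a
    ((hasDerivAt_id a).prodMk ((hasDerivAt_const a b).prodMk (hasDerivAt_const a c)))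

/-- partial derivative in the second variable. -/
theorem aux_hasDerivAt_snd {g : ℝ × ℝ × E → F} (hg : Differentiable ℝ g) (a b : ℝ) (c : E) :
    HasDerivAt (fun s => g (a, s, c)) (fderiv ℝ g (a, b, c) (0, 1, 0)) b :=
  (hg (a, b, c)).hasFDerivAt.comp_hasDerivAt b
    ((hasDerivAt_const b a).prodMk ((hasDerivAt_id b).prodMk (hasDerivAt_const b c)))

/-- partial fderiv in the third variable. -/
theorem aux_fderiv_trd {g : ℝ × ℝ × E → F} (hg : Differentiable ℝ g) (a b : ℝ) (c v : E) :
    fderiv ℝ (fun y => g (a, b, y)) c v = fderiv ℝ g (a, b, c) (0, 0, v) := by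
  have hj : HasFDerivAt (fun y : E => ((a : ℝ), (b : ℝ), y))
      (((0 : E →L[ℝ] ℝ)).prod (((0 : E →L[ℝ] ℝ)).prod (ContinuousLinearMap.id ℝ E))) c :=
    (hasFDerivAt_const a c).prodMk ((hasFDerivAt_const b c).prodMk (hasFDerivAt_id c))
  have h := ((hg (a, b, c)).hasFDerivAt.comp c hj).fderiv
  rw [show (fun y => g (a, b, y)) = g ∘ (fun y : E => ((a:ℝ), (b:ℝ), y)) from rfl, h]
  rfl

end Aux

section Aux2
variable {E : Type*} [NormedAddCommGroup E] [NormedSpace ℝ E]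
  {F : Type*} [NormedAddCommGroup F] [NormedSpace ℝ F]

theorem aux_eval_comm {g : ℝ × ℝ × E → F} (hg' : Differentiable ℝ (fderiv ℝ g))
    (p v0 w : ℝ × ℝ × E) :
    fderiv ℝ (fun q => fderiv ℝ g q v0) p w = fderiv ℝ (fderiv ℝ g) p w v0 := by
  have h := ((ContinuousLinearMap.apply ℝ F v0).hasFDerivAt.comp p (hg' p).hasFDerivAt).fderiv
  rw [show (fun q => fderiv ℝ g q v0)
      = (ContinuousLinearMap.apply ℝ F v0) ∘ (fderiv ℝ g) from rfl, h]
  rfl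

theorem aux_mixed {g : ℝ × ℝ × E → F} (hg : ContDiff ℝ 2 g) (a b : ℝ) (c : E) (w : ℝ × ℝ × E) :
    HasDerivAt (fun s => fderiv ℝ g (a, s, c) w)
      (fderiv ℝ (fderiv ℝ g) (a, b, c) w (0, 1, 0)) b := by
  have hg1 : Differentiable ℝ g := hg.differentiable two_ne_zero
  have hg' : Differentiable ℝ (fderiv ℝ g) :=
    (hg.fderiv_right (m := 1) (by norm_num)).differentiable one_ne_zero
  have h1 : HasDerivAt (fun s => fderiv ℝ g (a, s, c))
      (fderiv ℝ (fderiv ℝ g) (a, b, c) (0, 1, 0)) b := aux_hasDerivAt_snd hg' a b c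
  have h2 := h1.clm_apply (hasDerivAt_const b w)
  have hsym := second_derivative_symmetric (f := g) (fun y => (hg1 y).hasFDerivAt)
    ((hg' (a, b, c)).hasFDerivAt) (0, 1, 0) w
  simpa [hsym] using h2

end Aux2

section Star
variable {E : Type*} [NormedAddCommGroup E] [NormedSpace ℝ E]

theorem aux_norm_023 (a : ℝ) (v : E) : ‖((0:ℝ), (0:ℝ), v)‖ = ‖v‖ := by
  rw [Prod.norm_def, Prod.norm_def]
  simp [max_eq_right (norm_nonneg v)]

theorem aux_star
    (X Y : ℝ → ℝ → E → E) (P : ℝ → ℝ → E → E)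
    (hX : ContDiff ℝ 2 (fun p : ℝ × ℝ × E => X p.1 p.2.1 p.2.2))
    (hY : ContDiff ℝ 2 (fun p : ℝ × ℝ × E => Y p.1 p.2.1 p.2.2))
    (hP : ContDiff ℝ 2 (fun p : ℝ × ℝ × E => P p.1 p.2.1 p.2.2))
    (hP0 : ∀ ε x, P ε 0 x = x)
    (hPd : ∀ ε t x, HasDerivAt (fun τ => P ε τ x) (X ε t (P ε t x)) t)
    (hcomm : ∀ t ε x,
      deriv (fun ε' => X ε' t x) ε - deriv (fun t' => Y t' ε x) t =
        fderiv ℝ (fun y => Y t ε y) x (X ε t x)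
          - fderiv ℝ (fun y => X ε t y) x (Y t ε x)) :
    ∀ t ∈ Icc (0:ℝ) 1, ∀ (ε : ℝ) (y : E),
      fderiv ℝ (fun p : ℝ × ℝ × E => P p.1 p.2.1 p.2.2) (ε, t, y) (1, 0, Y 0 ε y)
        = Y t ε (P ε t y) := by
  set PT : ℝ × ℝ × E → E := fun p => P p.1 p.2.1 p.2.2 with hPT
  set XT : ℝ × ℝ × E → E := fun p => X p.1 p.2.1 p.2.2 with hXT
  set YT : ℝ × ℝ × E → E := fun p => Y p.1 p.2.1 p.2.2 with hYT
  have hPdiff : Differentiable ℝ PT := hP.differentiable two_ne_zero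
  have hXdiff : Differentiable ℝ XT := hX.differentiable two_ne_zero
  have hYdiff : Differentiable ℝ YT := hY.differentiable two_ne_zero
  have hP' : Differentiable ℝ (fderiv ℝ PT) :=
    (hP.fderiv_right (m := 1) (by norm_num)).differentiable one_ne_zero
  intro t ht ε y
  -- the function `f` measuring the failure of the key identity
  set w : ℝ × ℝ × E := (1, 0, Y 0 ε y) with hw
  set f : ℝ → E := fun s => fderiv ℝ PT (ε, s, y) w - Y s ε (P ε s y) with hf
  set f' : ℝ → E := fun s => fderiv ℝ XT (ε, s, P ε s y) (0, 0, f s) with hf'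
  -- pointwise identity for the `t`-partial of `P`
  have Pt : ∀ p : ℝ × ℝ × E, fderiv ℝ PT p (0, 1, 0) = XT (p.1, p.2.1, PT p) := by
    intro p
    have h1 : HasDerivAt (fun τ => PT (p.1, τ, p.2.2)) (fderiv ℝ PT p (0, 1, 0)) p.2.1 :=
      aux_hasDerivAt_snd hPdiff p.1 p.2.1 p.2.2
    exact h1.unique (hPd p.1 p.2.1 p.2.2)
  -- derivative of s ↦ fderiv PT (ε,s,y) w
  have claim1 : ∀ s, HasDerivAt (fun τ => fderiv ℝ PT (ε, τ, y) w)
      (fderiv ℝ XT (ε, s, P ε s y) (1, 0, fderiv ℝ PT (ε, s, y) w)) s := by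
    intro s
    have h := aux_mixed hP ε s y w
    have e1 : fderiv ℝ (fderiv ℝ PT) (ε, s, y) w ((0:ℝ), (1:ℝ), (0:E))
        = fderiv ℝ (fun q => fderiv ℝ PT q ((0:ℝ), (1:ℝ), (0:E))) (ε, s, y) w :=
      (aux_eval_comm hP' (ε, s, y) (0, 1, 0) w).symm
    have e2 : (fun q : ℝ × ℝ × E => fderiv ℝ PT q ((0:ℝ), (1:ℝ), (0:E)))
        = fun q : ℝ × ℝ × E => XT (q.1, q.2.1, PT q) := funext Pt
    have hm : HasFDerivAt (fun q : ℝ × ℝ × E => (q.1, q.2.1, PT q))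
        ((ContinuousLinearMap.fst ℝ ℝ (ℝ × E)).prod
          (((ContinuousLinearMap.fst ℝ ℝ E).comp (ContinuousLinearMap.snd ℝ ℝ (ℝ × E))).prod
            (fderiv ℝ PT (ε, s, y)))) (ε, s, y) :=
      (hasFDerivAt_fst).prodMk
        ((hasFDerivAt_fst.comp (ε, s, y) hasFDerivAt_snd).prodMk (hPdiff _).hasFDerivAt)
    have e3 := ((hXdiff ((ε:ℝ), (s:ℝ), P ε s y)).hasFDerivAt.comp ((ε:ℝ), (s:ℝ), (y:E)) hm).fderiv
    have e4 : fderiv ℝ (fun q : ℝ × ℝ × E => XT (q.1, q.2.1, PT q)) (ε, s, y) w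
        = fderiv ℝ XT (ε, s, P ε s y) (1, 0, fderiv ℝ PT (ε, s, y) w) := by
      rw [show (fun q : ℝ × ℝ × E => XT (q.1, q.2.1, PT q))
        = XT ∘ (fun q : ℝ × ℝ × E => (q.1, q.2.1, PT q)) from rfl, e3]
      rfl
    rw [show fderiv ℝ XT (ε, s, P ε s y) (1, 0, fderiv ℝ PT (ε, s, y) w)
      = fderiv ℝ (fderiv ℝ PT) (ε, s, y) w ((0:ℝ), (1:ℝ), (0:E)) by rw [e1, e2, e4]]
    exact h
  -- derivative of s ↦ Y s ε (P ε s y)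
  have claim2 : ∀ s, HasDerivAt (fun τ => Y τ ε (P ε τ y))
      (fderiv ℝ YT (s, ε, P ε s y) (1, 0, X ε s (P ε s y))) s := by
    intro s
    have hc : HasDerivAt (fun τ : ℝ => ((τ : ℝ), (ε : ℝ), P ε τ y))
        ((1 : ℝ), (0 : ℝ), X ε s (P ε s y)) s :=
      (hasDerivAt_id s).prodMk ((hasDerivAt_const s ε).prodMk (hPd ε s y))
    exact (hYdiff _).hasFDerivAt.comp_hasDerivAt s hc
  -- translation of hcomm
  have claim3 : ∀ s : ℝ,
      fderiv ℝ XT (ε, s, P ε s y) (1, 0, 0)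
        + fderiv ℝ XT (ε, s, P ε s y) (0, 0, Y s ε (P ε s y))
      = fderiv ℝ YT (s, ε, P ε s y) (1, 0, 0)
        + fderiv ℝ YT (s, ε, P ε s y) (0, 0, X ε s (P ε s y)) := by
    intro s
    have h := hcomm s ε (P ε s y)
    have h1 : deriv (fun ε' => X ε' s (P ε s y)) ε
        = fderiv ℝ XT (ε, s, P ε s y) (1, 0, 0) :=
      HasDerivAt.deriv (aux_hasDerivAt_fst hXdiff ε s (P ε s y))
    have h2 : deriv (fun t' => Y t' ε (P ε s y)) s
        = fderiv ℝ YT (s, ε, P ε s y) (1, 0, 0) :=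
      HasDerivAt.deriv (aux_hasDerivAt_fst hYdiff s ε (P ε s y))
    have h3 : fderiv ℝ (fun z => Y s ε z) (P ε s y) (X ε s (P ε s y))
        = fderiv ℝ YT (s, ε, P ε s y) (0, 0, X ε s (P ε s y)) :=
      aux_fderiv_trd hYdiff s ε (P ε s y) (X ε s (P ε s y))
    have h4 : fderiv ℝ (fun z => X ε s z) (P ε s y) (Y s ε (P ε s y))
        = fderiv ℝ XT (ε, s, P ε s y) (0, 0, Y s ε (P ε s y)) :=
      aux_fderiv_trd hXdiff ε s (P ε s y) (Y s ε (P ε s y))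
    rw [h1, h2, h3, h4] at h
    have := sub_eq_sub_iff_add_eq_add.mp h
    linear_combination (norm := abel) this
  -- `f` satisfies the linear ODE
  have hd : ∀ s, HasDerivAt f (f' s) s := by
    intro s
    have h := (claim1 s).sub (claim2 s)
    have e : fderiv ℝ XT (ε, s, P ε s y) (1, 0, fderiv ℝ PT (ε, s, y) w)
        - fderiv ℝ YT (s, ε, P ε s y) (1, 0, X ε s (P ε s y)) = f' s := by
      have e1 : ((1:ℝ), (0:ℝ), fderiv ℝ PT (ε, s, y) w)
          = ((1:ℝ), (0:ℝ), (0:E)) + ((0:ℝ), (0:ℝ), Y s ε (P ε s y))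
            + ((0:ℝ), (0:ℝ), f s) := by
        simp only [hf, Prod.mk_add_mk]
        norm_num
      have e2 : ((1:ℝ), (0:ℝ), X ε s (P ε s y))
          = ((1:ℝ), (0:ℝ), (0:E)) + ((0:ℝ), (0:ℝ), X ε s (P ε s y)) := by
        simp [Prod.mk_add_mk]
      rw [hf', e1, e2, map_add, map_add, map_add]
      have := claim3 s
      linear_combination (norm := abel) this
    rw [← e]
    exact h
  -- initial condition
  have h0 : f 0 = 0 := by
    have hj : HasFDerivAt (fun q : ℝ × E => PT (q.1, (0:ℝ), q.2))
        ((fderiv ℝ PT (ε, 0, y)).comp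
          ((ContinuousLinearMap.fst ℝ ℝ E).prod
            (((0 : ℝ × E →L[ℝ] ℝ)).prod (ContinuousLinearMap.snd ℝ ℝ E)))) (ε, y) :=
      by
        have ho : HasFDerivAt PT (fderiv ℝ PT (ε, 0, y)) ((ε:ℝ), (0:ℝ), y) :=
          (hPdiff ((ε:ℝ), (0:ℝ), y)).hasFDerivAt
        have hin : HasFDerivAt (fun q : ℝ × E => (q.1, (0:ℝ), q.2))
            ((ContinuousLinearMap.fst ℝ ℝ E).prod
              (((0 : ℝ × E →L[ℝ] ℝ)).prod (ContinuousLinearMap.snd ℝ ℝ E))) ((ε:ℝ), (y:E)) :=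
          hasFDerivAt_fst.prodMk ((hasFDerivAt_const (0:ℝ) _).prodMk hasFDerivAt_snd)
        have hcomp := ho.comp ((ε:ℝ), (y:E)) hin
        exact hcomp
    have heq : (fun q : ℝ × E => PT (q.1, (0:ℝ), q.2)) = fun q : ℝ × E => q.2 :=
      funext fun q => hP0 q.1 q.2
    rw [heq] at hj
    have huniq := hj.unique hasFDerivAt_snd
    have happ := congrArg (fun L : (ℝ × E) →L[ℝ] E => L (1, Y 0 ε y)) huniq
    simp only [ContinuousLinearMap.comp_apply, ContinuousLinearMap.prod_apply,
      ContinuousLinearMap.coe_fst', ContinuousLinearMap.coe_snd',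
      ContinuousLinearMap.zero_apply] at happ
    have : fderiv ℝ PT (ε, 0, y) w = Y 0 ε y := happ
    rw [hf]
    simp only [this, hP0 ε y, sub_self]
  -- Grönwall bound
  have hcont : ContinuousOn (fun s => fderiv ℝ XT (ε, s, P ε s y)) (Icc (0:ℝ) 1) := by
    have hc1 : Continuous fun s : ℝ => ((ε:ℝ), (s:ℝ), P ε s y) := by
      refine continuous_const.prodMk (continuous_id.prodMk ?_)
      exact hPdiff.continuous.comp
        (continuous_const.prodMk (continuous_id.prodMk continuous_const))
    exact ((hX.continuous_fderiv (by norm_num)).comp hc1).continuousOn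
  obtain ⟨K, hK⟩ := (isCompact_Icc (a := (0:ℝ)) (b := 1)).exists_bound_of_continuousOn hcont
  have hb : ∀ s ∈ Icc (0:ℝ) 1, ‖f' s‖ ≤ K * ‖f s‖ := by
    intro s hs
    calc ‖f' s‖ ≤ ‖fderiv ℝ XT (ε, s, P ε s y)‖ * ‖((0:ℝ), (0:ℝ), f s)‖ :=
          (fderiv ℝ XT (ε, s, P ε s y)).le_opNorm _
      _ = ‖fderiv ℝ XT (ε, s, P ε s y)‖ * ‖f s‖ := by rw [aux_norm_023 0 (f s)]
      _ ≤ K * ‖f s‖ := by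
          exact mul_le_mul_of_nonneg_right (hK s hs) (norm_nonneg _)
  have := aux_gronwall_zero hd h0 hb t ht
  rw [hf] at this
  have := sub_eq_zero.mp this
  exact this

end Star



/-- Let `X^ε_t` and `Y^t_ε` be two families of time-dependent smooth vector
fields on `E` satisfying the evolution equation
`dX/dε − dY/dt = [X,Y]` (equivalently, `∂/∂t + X` and `∂/∂ε + Y` commute on
`E × I × I`), and let `P ε t = φ^{X^ε}_{t,0}` and `Q t ε = φ^{Y^t}_{ε,0}` be
their (assumed globally defined, smooth) time-dependent flows.  Then
`φ^{X^ε}_{t,0} ∘ φ^{Y^0}_{ε,0} = φ^{Y^t}_{ε,0} ∘ φ^{X^0}_{t,0}`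
for all `t, ε ∈ [0,1]`. -/
theorem flows_commute_of_evolution_equation
    {E : Type*} [NormedAddCommGroup E] [NormedSpace ℝ E]
    (X Y : ℝ → ℝ → E → E) (P Q : ℝ → ℝ → E → E)
    (hX : ContDiff ℝ (⊤ : ℕ∞) (fun p : ℝ × ℝ × E => X p.1 p.2.1 p.2.2))
    (hY : ContDiff ℝ (⊤ : ℕ∞) (fun p : ℝ × ℝ × E => Y p.1 p.2.1 p.2.2))
    (hP : ContDiff ℝ (⊤ : ℕ∞) (fun p : ℝ × ℝ × E => P p.1 p.2.1 p.2.2))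
    (hQ : ContDiff ℝ (⊤ : ℕ∞) (fun p : ℝ × ℝ × E => Q p.1 p.2.1 p.2.2))
    -- `P ε` is the flow of the time-dependent vector field `X^ε` from time 0:
    (hP0 : ∀ ε x, P ε 0 x = x)
    (hPd : ∀ ε t x, HasDerivAt (fun τ => P ε τ x) (X ε t (P ε t x)) t)
    -- `Q t` is the flow of the time-dependent vector field `Y^t` from time 0:
    (hQ0 : ∀ t x, Q t 0 x = x)
    (hQd : ∀ t ε x, HasDerivAt (fun τ => Q t τ x) (Y t ε (Q t ε x)) ε)
    -- the evolution equation `dX/dε − dY/dt = [X,Y]`: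
    (hcomm : ∀ t ε x,
      deriv (fun ε' => X ε' t x) ε - deriv (fun t' => Y t' ε x) t =
        fderiv ℝ (fun y => Y t ε y) x (X ε t x)
          - fderiv ℝ (fun y => X ε t y) x (Y t ε x)) :
    ∀ t ∈ Set.Icc (0 : ℝ) 1, ∀ ε ∈ Set.Icc (0 : ℝ) 1, ∀ x : E,
      P ε t (Q 0 ε x) = Q t ε (P 0 t x) := by
  intro t ht ε hε x
  have hX2 : ContDiff ℝ 2 (fun p : ℝ × ℝ × E => X p.1 p.2.1 p.2.2) := hX.of_le (WithTop.coe_le_coe.mpr le_top)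
  have hY2 : ContDiff ℝ 2 (fun p : ℝ × ℝ × E => Y p.1 p.2.1 p.2.2) := hY.of_le (WithTop.coe_le_coe.mpr le_top)
  have hP2 : ContDiff ℝ 2 (fun p : ℝ × ℝ × E => P p.1 p.2.1 p.2.2) := hP.of_le (WithTop.coe_le_coe.mpr le_top)
  have hQ2 : ContDiff ℝ 2 (fun p : ℝ × ℝ × E => Q p.1 p.2.1 p.2.2) := hQ.of_le (WithTop.coe_le_coe.mpr le_top)
  have star := aux_star X Y P hX2 hY2 hP2 hP0 hPd hcomm
  set PT : ℝ × ℝ × E → E := fun p => P p.1 p.2.1 p.2.2 with hPT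
  set YT : ℝ × ℝ × E → E := fun p => Y p.1 p.2.1 p.2.2 with hYT
  have hPdiff : Differentiable ℝ PT := hP2.differentiable two_ne_zero
  have hYdiff : Differentiable ℝ YT := hY2.differentiable two_ne_zero
  set F : ℝ → E := fun e => P e t (Q 0 e x) with hF
  set G : ℝ → E := fun e => Q t e (P 0 t x) with hG
  have hFd : ∀ e, HasDerivAt F (Y t e (F e)) e := by
    intro e
    have hc : HasDerivAt (fun τ : ℝ => ((τ : ℝ), (t : ℝ), Q 0 τ x))
        ((1 : ℝ), (0 : ℝ), Y 0 e (Q 0 e x)) e :=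
      (hasDerivAt_id e).prodMk ((hasDerivAt_const e t).prodMk (hQd 0 e x))
    have h := (hPdiff ((e:ℝ), (t:ℝ), Q 0 e x)).hasFDerivAt.comp_hasDerivAt e hc
    rw [star t ht e (Q 0 e x)] at h
    exact h
  have hGd : ∀ e, HasDerivAt G (Y t e (G e)) e := fun e => hQd t e (P 0 t x)
  set g : ℝ → E := fun e => F e - G e with hg
  have hgd : ∀ e, HasDerivAt g (Y t e (F e) - Y t e (G e)) e :=
    fun e => (hFd e).sub (hGd e)
  have hg0 : g 0 = 0 := by
    show P 0 t (Q 0 0 x) - Q t 0 (P 0 t x) = 0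
    rw [hQ0, hQ0, sub_self]
  have hFc : Continuous F := continuous_iff_continuousAt.mpr fun e => (hFd e).continuousAt
  have hGc : Continuous G := continuous_iff_continuousAt.mpr fun e => (hGd e).continuousAt
  set m : ℝ × ℝ → ℝ × ℝ × E :=
    fun q => ((t : ℝ), q.1, q.2 • F q.1 + (1 - q.2) • G q.1) with hm
  have hmc : Continuous m :=
    continuous_const.prodMk (continuous_fst.prodMk
      ((continuous_snd.smul (hFc.comp continuous_fst)).add
        ((continuous_const.sub continuous_snd).smul (hGc.comp continuous_fst))))
  have hScomp : IsCompact (m '' (Set.Icc (0:ℝ) 1 ×ˢ Set.Icc (0:ℝ) 1)) :=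
    (isCompact_Icc.prod isCompact_Icc).image hmc
  obtain ⟨C, hC⟩ := hScomp.exists_bound_of_continuousOn
    ((hY2.continuous_fderiv (by norm_num)).continuousOn (s := _))
  have hb : ∀ e ∈ Set.Icc (0:ℝ) 1, ‖Y t e (F e) - Y t e (G e)‖ ≤ C * ‖g e‖ := by
    intro e he
    have hseg : segment ℝ ((t:ℝ), (e:ℝ), G e) ((t:ℝ), (e:ℝ), F e)
        ⊆ m '' (Set.Icc (0:ℝ) 1 ×ˢ Set.Icc (0:ℝ) 1) := by
      rw [segment_eq_image]
      rintro p ⟨θ, hθ, rfl⟩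
      refine ⟨(e, θ), ⟨he, hθ⟩, ?_⟩
      simp only [hm, Prod.smul_mk, Prod.mk_add_mk, smul_eq_mul, Prod.mk.injEq]
      refine ⟨by ring, by ring, by abel⟩
    have hnorm := Convex.norm_image_sub_le_of_norm_fderiv_le (f := YT) (C := C)
      (fun p _ => hYdiff p)
      (fun p hp => hC p (hseg hp)) (convex_segment _ _)
      (left_mem_segment ℝ _ _) (right_mem_segment ℝ _ _)
    have hsub : ((t:ℝ), (e:ℝ), F e) - ((t:ℝ), (e:ℝ), G e) = ((0:ℝ), (0:ℝ), F e - G e) := by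
      simp [Prod.mk_sub_mk]
    rw [hsub, aux_norm_023 0 (F e - G e)] at hnorm
    exact hnorm
  have := aux_gronwall_zero hgd hg0 hb ε hε
  exact sub_eq_zero.mp this
end

section
/- Let 𝒢 ⇉ M be a group-like structure: a groupoid, and let Ψ : G ⋉ M → 𝒢 be a groupoid morphism from an action groupoid. Then the set C := {(g^{-1}, Ψ(g, m)) : g ∈ G, m ∈ M, arrows composable appropriately}, viewed inside the semidirect product groupoid (G ⋉ M) ⋉ 𝒢, is a normal subgroupoid: for every element c of C and every composable arrow x of the semidirect product, x·c·x^{-1} ∈ C. -/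
/-- An algebraic groupoid structure on a type `A` of arrows over a type `M`
of objects.  Composition `comp x y` is meaningful when `src x = tgt y`
(composition is written right-to-left: `x · y` with `s(x) = t(y)`); the
axioms are only required for composable pairs. -/
structure GroupoidStruct (A M : Type*) where
  src : A → M
  tgt : A → M
  comp : A → A → A
  unit : M → A
  inv : A → A
  src_unit : ∀ m, src (unit m) = m
  tgt_unit : ∀ m, tgt (unit m) = m
  src_comp : ∀ x y, src x = tgt y → src (comp x y) = src y
  tgt_comp : ∀ x y, src x = tgt y → tgt (comp x y) = tgt x
  comp_assoc : ∀ x y z, src x = tgt y → src y = tgt z →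
    comp (comp x y) z = comp x (comp y z)
  unit_comp : ∀ x, comp (unit (tgt x)) x = x
  comp_unit : ∀ x, comp x (unit (src x)) = x
  src_inv : ∀ x, src (inv x) = tgt x
  tgt_inv : ∀ x, tgt (inv x) = src x
  comp_inv : ∀ x, comp x (inv x) = unit (tgt x)
  inv_comp : ∀ x, comp (inv x) x = unit (src x)

/-- Composition in the semidirect product groupoid `G ⋉ 𝒢`:
`(g₂,a₂)·(g₁,a₁) = (g₂g₁, Φ_{g₁}⁻¹(a₂)·a₁)`. -/
def sdComp {G M A : Type*} [Group G] (𝒢 : GroupoidStruct A M)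
    (Φ : G → A → A) : G × A → G × A → G × A :=
  fun x y => (x.1 * y.1, 𝒢.comp (Φ y.1⁻¹ x.2) y.2)

/-- Inversion in the semidirect product groupoid `G ⋉ 𝒢`:
`(g,a)⁻¹ = (g⁻¹, Φ_g(a)⁻¹)`. -/
def sdInv {G M A : Type*} [Group G] (𝒢 : GroupoidStruct A M)
    (Φ : G → A → A) : G × A → G × A :=
  fun x => (x.1⁻¹, 𝒢.inv (Φ x.1 x.2))

/-- Let `G` act on `M` and on a groupoid `𝒢 ⇉ M` by groupoid automorphisms
`Φ`, and let `Ψ : G ⋉ M → 𝒢` be a groupoid morphism satisfying the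
compatibilities `Ψ(ghg⁻¹, g·m) = Φ_g(Ψ(h,m))` and
`Φ_h(a) = Ψ(h,t(a)) · a · Ψ(h,s(a))⁻¹`.  Then the curvature subgroupoid
`C = {(h⁻¹, Ψ(h,m))}` of the semidirect product groupoid `G ⋉ 𝒢` is normal:
every conjugate `x · c · x⁻¹` of an element `c ∈ C` by a composable arrow
`x` of `G ⋉ 𝒢` again lies in `C`. -/
theorem curvature_subgroupoid_normal
    {G M A : Type*} [Group G] [MulAction G M]
    (𝒢 : GroupoidStruct A M) (Φ : G → A → A) (Ψ : G → M → A)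
    -- `Φ` is an action of `G` on `𝒢` by groupoid automorphisms covering the
    -- action on `M`:
    (hΦone : ∀ a, Φ 1 a = a)
    (hΦmul : ∀ g h a, Φ (g * h) a = Φ g (Φ h a))
    (hΦsrc : ∀ g a, 𝒢.src (Φ g a) = g • 𝒢.src a)
    (hΦtgt : ∀ g a, 𝒢.tgt (Φ g a) = g • 𝒢.tgt a)
    (hΦcomp : ∀ g a b, 𝒢.src a = 𝒢.tgt b →
      Φ g (𝒢.comp a b) = 𝒢.comp (Φ g a) (Φ g b))
    (hΦunit : ∀ g m, Φ g (𝒢.unit m) = 𝒢.unit (g • m))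
    (hΦinv : ∀ g a, Φ g (𝒢.inv a) = 𝒢.inv (Φ g a))
    -- `Ψ` is a groupoid morphism from the action groupoid `G ⋉ M`:
    (hs : ∀ g m, 𝒢.src (Ψ g m) = m)
    (ht : ∀ g m, 𝒢.tgt (Ψ g m) = g • m)
    (hone : ∀ m, Ψ 1 m = 𝒢.unit m)
    (hmul : ∀ g h m, Ψ (g * h) m = 𝒢.comp (Ψ g (h • m)) (Ψ h m))
    -- compatibilities:
    (hcompat1 : ∀ g h m, Ψ (g * h * g⁻¹) (g • m) = Φ g (Ψ h m))
    (hcompat2 : ∀ h a, Φ h a =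
      𝒢.comp (𝒢.comp (Ψ h (𝒢.tgt a)) a) (𝒢.inv (Ψ h (𝒢.src a)))) :
    ∀ (h : G) (m : M) (g : G) (a : A), 𝒢.src a = m →
      ∃ (h' : G) (m' : M),
        sdComp 𝒢 Φ (sdComp 𝒢 Φ (g, a) (h⁻¹, Ψ h m)) (sdInv 𝒢 Φ (g, a)) =
          (h'⁻¹, Ψ h' m') := by
  intro h m g a hsrc
  refine ⟨g * h * g⁻¹, g • 𝒢.tgt a, ?_⟩
  have hsΨt : 𝒢.src (Ψ h (𝒢.tgt a)) = 𝒢.tgt a := hs h _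
  have e1 : 𝒢.comp (Φ h a) (Ψ h m) = 𝒢.comp (Ψ h (𝒢.tgt a)) a := by
    rw [hcompat2 h a, hsrc]
    rw [𝒢.comp_assoc _ _ _ ?c1 ?c2]
    · rw [𝒢.inv_comp, hs]
      have hX : 𝒢.src (𝒢.comp (Ψ h (𝒢.tgt a)) a) = m := by
        rw [𝒢.src_comp _ _ hsΨt, hsrc]
      conv_lhs => rw [← hX, 𝒢.comp_unit]
    case c1 => rw [𝒢.src_comp _ _ hsΨt, hsrc, 𝒢.tgt_inv, hs]
    case c2 => exact 𝒢.src_inv _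
  have e2 : 𝒢.comp (Φ g (𝒢.comp (Φ h a) (Ψ h m))) (𝒢.inv (Φ g a))
      = Ψ (g * h * g⁻¹) (g • 𝒢.tgt a) := by
    rw [e1, hΦcomp g _ _ hsΨt, 𝒢.comp_assoc _ _ _ ?d1 ?d2, 𝒢.comp_inv, hΦtgt]
    · have hX : 𝒢.src (Φ g (Ψ h (𝒢.tgt a))) = g • 𝒢.tgt a := by
        rw [hΦsrc, hsΨt]
      conv_lhs => rw [← hX, 𝒢.comp_unit]
      rw [hcompat1]
    case d1 => rw [hΦsrc, hsΨt, hΦtgt]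
    case d2 => exact (𝒢.tgt_inv _).symm
  simp only [sdComp, sdInv, inv_inv, Prod.mk.injEq]
  exact ⟨by group, e2⟩
end
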